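/- arXiv:math/0612237 — 5 statements merged into one kernel-verified Lean document; each statement's English description precedes it below -/
import Mathlib

section
/- Let T > 0, let E ⊆ [0,T] be Lebesgue measurable with m(E) > 0, let r > 0, and let (a_i) be a finitely supported family of real numbers with a_i = 0 whenever λ_i > r. Define φ(t) = ∑_i a_i·exp(−λ_i (T−t))·X_i for t ∈ [0,T]. Then ‖φ(0)‖² ≤ (C₁·exp(C₂·√r) / m(E)²)·(∫₀^T χ_E(t)·‖B(φ(t))‖ dt)². (Observability inequality over the measurable time set E for backward heat solutions with spectrum below r.) -/
open MeasureTheory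
open scoped RealInnerProductSpace

/-!
Each mode of the backward heat solution grows in time, so `‖φ 0‖ ≤ ‖φ t‖` for every `t ∈ [0, T]`,
and the spectral inequality at time `t` bounds `‖φ 0‖ ^ 2` by `C₁ e^{C₂ √r} ‖B (φ t)‖ ^ 2`.
Taking square roots and averaging this pointwise bound over `E` gives the inequality.
-/

section Orthonormal

variable {ι H : Type*} [NormedAddCommGroup H] [InnerProductSpace ℝ H] {v : ι → H}

theorem Orthonormal.norm_sum_smul_sq (hv : Orthonormal ℝ v) (s : Finset ι) (c : ι → ℝ) :
    ‖∑ i ∈ s, c i • v i‖ ^ 2 = ∑ i ∈ s, c i ^ 2 := by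
  rw [← real_inner_self_eq_norm_sq, hv.inner_sum c c s]
  simp only [sq, RCLike.conj_to_real]

theorem Orthonormal.norm_sum_smul_le_of_abs_le (hv : Orthonormal ℝ v) (s : Finset ι)
    {c d : ι → ℝ} (hcd : ∀ i ∈ s, |c i| ≤ |d i|) :
    ‖∑ i ∈ s, c i • v i‖ ≤ ‖∑ i ∈ s, d i • v i‖ := by
  refine (pow_le_pow_iff_left₀ (norm_nonneg _) (norm_nonneg _) two_ne_zero).1 ?_
  rw [hv.norm_sum_smul_sq, hv.norm_sum_smul_sq]
  exact Finset.sum_le_sum fun i hi => sq_le_sq.2 (hcd i hi)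

theorem Orthonormal.monotone_norm_sum_exp_smul (hv : Orthonormal ℝ v) {lam : ι → ℝ}
    (hlam : ∀ i, 0 ≤ lam i) (s : Finset ι) (a : ι → ℝ) (T : ℝ) :
    Monotone fun t => ‖∑ i ∈ s, (a i * Real.exp (-lam i * (T - t))) • v i‖ := by
  intro t t' htt'
  refine hv.norm_sum_smul_le_of_abs_le s fun i _ => ?_
  rw [abs_mul, abs_mul, Real.abs_exp, Real.abs_exp]
  gcongr |a i| * Real.exp ?_
  nlinarith [hlam i]

end Orthonormal

theorem sum_sq_le_of_finsupp_sum_sq_le {ι H F : Type*} [AddCommMonoid H] [Module ℝ H] [Norm F]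
    {X : ι → H} {lam : ι → ℝ} {B : H → F} {K r : ℝ}
    (hK : ∀ a : ι →₀ ℝ, (∀ i, r < lam i → a i = 0) →
      ∑ i ∈ a.support, a i ^ 2 ≤ K * ‖B (∑ i ∈ a.support, a i • X i)‖ ^ 2)
    (s : Finset ι) (c : ι → ℝ) (hc : ∀ i ∈ s, r < lam i → c i = 0) :
    ∑ i ∈ s, c i ^ 2 ≤ K * ‖B (∑ i ∈ s, c i • X i)‖ ^ 2 := by
  classical
  set a : ι →₀ ℝ := Finsupp.indicator s fun i _ => c i
  have ha_apply : ∀ i ∈ s, a i = c i := fun i hi => Finsupp.indicator_of_mem hi _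
  have ha_supp : a.support ⊆ s := Finsupp.support_indicator_subset s _
  have ha_zero : ∀ i ∉ a.support, a i = 0 := fun i hi => Finsupp.notMem_support_iff.1 hi
  have hsq : ∑ i ∈ a.support, a i ^ 2 = ∑ i ∈ s, c i ^ 2 := by
    rw [Finset.sum_subset ha_supp fun i _ hi => by rw [ha_zero i hi, sq, zero_mul]]
    exact Finset.sum_congr rfl fun i hi => by rw [ha_apply i hi]
  have hvec : ∑ i ∈ a.support, a i • X i = ∑ i ∈ s, c i • X i := by
    rw [Finset.sum_subset ha_supp fun i _ hi => by rw [ha_zero i hi, zero_smul]]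
    exact Finset.sum_congr rfl fun i hi => by rw [ha_apply i hi]
  have ha_low : ∀ i, r < lam i → a i = 0 := fun i hi => by
    by_cases his : i ∈ s
    · rw [ha_apply i his, hc i his hi]
    · exact ha_zero i fun h => his (ha_supp h)
  simpa only [hsq, hvec] using hK a ha_low

theorem setIntegral_Ioc_indicator_one_mul {E : Set ℝ} {a b : ℝ} (hE : MeasurableSet E)
    (hE_sub : E ⊆ Set.Icc a b) (g : ℝ → ℝ) :
    ∫ t in Set.Ioc a b, E.indicator (fun _ => (1 : ℝ)) t * g t = ∫ t in E, g t := by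
  have hindicator : (fun t => E.indicator (fun _ => (1 : ℝ)) t * g t) = E.indicator g := by
    funext t
    by_cases ht : t ∈ E <;> simp [ht]
  rw [hindicator, setIntegral_indicator hE]
  refine setIntegral_congr_set ?_
  simpa only [Set.inter_eq_right.2 hE_sub] using
    (Ioc_ae_eq_Icc (a := a) (b := b) (μ := volume)).inter (ae_eq_refl E)

theorem sq_le_div_measureReal_sq_mul_setIntegral_sq {α : Type*} [MeasurableSpace α]
    {μ : Measure α} {E : Set α} (hE : MeasurableSet E) (hμE : μ E ≠ ⊤) (hμE_pos : 0 < μ E)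
    {g : α → ℝ} (hg : IntegrableOn g E μ) (hg_nonneg : ∀ t ∈ E, 0 ≤ g t) {K x : ℝ} (hK : 0 ≤ K)
    (hx : ∀ t ∈ E, x ^ 2 ≤ K * g t ^ 2) :
    x ^ 2 ≤ K / μ.real E ^ 2 * (∫ t in E, g t ∂μ) ^ 2 := by
  have hpos : 0 < μ.real E := ENNReal.toReal_pos hμE_pos.ne' hμE
  have hpointwise : ∀ t ∈ E, |x| ≤ √K * g t := fun t ht => by
    rw [← Real.sqrt_sq_eq_abs, ← Real.sqrt_sq (hg_nonneg t ht), ← Real.sqrt_mul hK]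
    exact Real.sqrt_le_sqrt (hx t ht)
  have hmean : |x| * μ.real E ≤ √K * ∫ t in E, g t ∂μ := by
    rw [← integral_const_mul]
    exact setIntegral_ge_of_const_le_real hE hμE hpointwise (hg.const_mul _)
  have hsq : x ^ 2 * μ.real E ^ 2 ≤ K * (∫ t in E, g t ∂μ) ^ 2 := by
    have := pow_le_pow_left₀ (by positivity) hmean 2
    rwa [mul_pow, sq_abs, mul_pow, Real.sq_sqrt hK] at this
  rw [div_mul_eq_mul_div, le_div_iff₀ (by positivity)]
  exact hsq

theorem observability_measurable_time_set_general
    {H : Type*} [NormedAddCommGroup H] [InnerProductSpace ℝ H]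
    (X : HilbertBasis ℕ ℝ H) (lam : ℕ → ℝ)
    (hlam_pos : ∀ i, 0 < lam i)
    (B : H →L[ℝ] H)
    (C₁ C₂ : ℝ) (hC₁ : 1 ≤ C₁)
    (hLZ : ∀ r : ℝ, 0 < r → ∀ a : ℕ →₀ ℝ, (∀ i, r < lam i → a i = 0) →
      ∑ i ∈ a.support, (a i) ^ 2 ≤
        C₁ * Real.exp (C₂ * Real.sqrt r) * ‖B (∑ i ∈ a.support, a i • X i)‖ ^ 2)
    (T : ℝ) (E : Set ℝ) (hE_meas : MeasurableSet E)
    (hE_sub : E ⊆ Set.Icc 0 T) (hE_pos : 0 < volume E)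
    (r : ℝ) (hr : 0 < r) (a : ℕ →₀ ℝ) (ha : ∀ i, r < lam i → a i = 0)
    (φ : ℝ → H)
    (hφ : ∀ t, φ t = ∑ i ∈ a.support, (a i * Real.exp (-(lam i) * (T - t))) • X i) :
    ‖φ 0‖ ^ 2 ≤ (C₁ * Real.exp (C₂ * Real.sqrt r) / (volume E).toReal ^ 2) *
      (∫ t in Set.Ioc (0 : ℝ) T,
          (Set.indicator E (fun _ => (1 : ℝ)) t) * ‖B (φ t)‖) ^ 2 := by
  have hK : 0 ≤ C₁ * Real.exp (C₂ * Real.sqrt r) := by positivity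
  have hφ_eq := funext hφ
  have hcont : Continuous fun t => ‖B (φ t)‖ := by rw [hφ_eq]; fun_prop
  have hpointwise : ∀ t ∈ E, ‖φ 0‖ ^ 2 ≤ C₁ * Real.exp (C₂ * Real.sqrt r) * ‖B (φ t)‖ ^ 2 :=
    fun t ht => calc
      ‖φ 0‖ ^ 2 ≤ ‖φ t‖ ^ 2 := by
        rw [hφ_eq]
        gcongr
        exact X.orthonormal.monotone_norm_sum_exp_smul (fun i => (hlam_pos i).le) _ _ _
          (hE_sub ht).1
      _ = ∑ i ∈ a.support, (a i * Real.exp (-(lam i) * (T - t))) ^ 2 := by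
        rw [hφ, X.orthonormal.norm_sum_smul_sq]
      _ ≤ C₁ * Real.exp (C₂ * Real.sqrt r) * ‖B (φ t)‖ ^ 2 := by
        rw [hφ]
        exact sum_sq_le_of_finsupp_sum_sq_le (hLZ r hr) _ _ fun i _ hi => by rw [ha i hi, zero_mul]
  have hμE : volume E ≠ ⊤ := ((measure_mono hE_sub).trans_lt measure_Icc_lt_top).ne
  rw [setIntegral_Ioc_indicator_one_mul hE_meas hE_sub]
  exact sq_le_div_measureReal_sq_mul_setIntegral_sq hE_meas hμE hE_pos
    (hcont.integrableOn_Icc.mono_set hE_sub) (fun _ _ => norm_nonneg _) hK hpointwise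

/-- Observability inequality over a measurable time set E for backward heat
solutions with spectrum below r (inequality (2.3)). -/
theorem observability_measurable_time_set
    {H : Type*} [NormedAddCommGroup H] [InnerProductSpace ℝ H] [CompleteSpace H]
    (X : HilbertBasis ℕ ℝ H) (lam : ℕ → ℝ)
    (hlam_pos : ∀ i, 0 < lam i) (hlam_mono : Monotone lam)
    (hlam_tendsto : Filter.Tendsto lam Filter.atTop Filter.atTop)
    (B : H →L[ℝ] H) (hB : ∀ x, ‖B x‖ ≤ ‖x‖)
    (C₁ C₂ : ℝ) (hC₁ : 1 ≤ C₁) (hC₂ : 0 < C₂)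
    (hLZ : ∀ r : ℝ, 0 < r → ∀ a : ℕ →₀ ℝ, (∀ i, r < lam i → a i = 0) →
      ∑ i ∈ a.support, (a i) ^ 2 ≤
        C₁ * Real.exp (C₂ * Real.sqrt r) * ‖B (∑ i ∈ a.support, a i • X i)‖ ^ 2)
    (T : ℝ) (hT : 0 < T) (E : Set ℝ) (hE_meas : MeasurableSet E)
    (hE_sub : E ⊆ Set.Icc 0 T) (hE_pos : 0 < volume E)
    (r : ℝ) (hr : 0 < r) (a : ℕ →₀ ℝ) (ha : ∀ i, r < lam i → a i = 0)
    (φ : ℝ → H)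
    (hφ : ∀ t, φ t = ∑ i ∈ a.support, (a i * Real.exp (-(lam i) * (T - t))) • X i) :
    ‖φ 0‖ ^ 2 ≤ (C₁ * Real.exp (C₂ * Real.sqrt r) / (volume E).toReal ^ 2) *
      (∫ t in Set.Ioc (0 : ℝ) T,
          (Set.indicator E (fun _ => (1 : ℝ)) t) * ‖B (φ t)‖) ^ 2 :=
  observability_measurable_time_set_general X lam hlam_pos B C₁ C₂ hC₁ hLZ T E hE_meas hE_sub hE_pos
    r hr a ha φ hφ
end

section
/- Let T > 0 and let E ⊆ [0,T] be Lebesgue measurable with m(E) > 0. Then for almost every t̃ ∈ E there exist constants ρ > 0 and C₀ > 0 and a strictly increasing sequence (t_i)_{i ≥ 1} of points of [0,T] with t_i < t̃ for every i and t_i → t̃ as i → ∞, such that for every i ≥ 1: m(E ∩ [t_i, t_{i+1}]) ≥ ρ·(t_{i+1} − t_i), and t_{i+1} − t_i ≤ C₀·(t_{i+2} − t_{i+1}). -/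
open MeasureTheory ENNReal

/-- Lemma 2.4: for almost every point t̃ of a measurable set E ⊆ [0,T] of positive
measure there is a strictly increasing sequence (t_i) in [0,T] converging to t̃ from
below, along which E has density at least ρ and consecutive gaps are comparable. -/
theorem density_points_sequence
    (T : ℝ) (hT : 0 < T) (E : Set ℝ) (hE_meas : MeasurableSet E)
    (hE_sub : E ⊆ Set.Icc 0 T) (hE_pos : 0 < volume E) :
    ∀ᵐ ttilde ∂(volume.restrict E),
      ∃ ρ C₀ : ℝ, 0 < ρ ∧ 0 < C₀ ∧
        ∃ t : ℕ → ℝ, StrictMono t ∧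
          (∀ i : ℕ, t i ∈ Set.Icc 0 T) ∧
          (∀ i : ℕ, t i < ttilde) ∧
          Filter.Tendsto t Filter.atTop (nhds ttilde) ∧
          (∀ i : ℕ, ρ * (t (i + 1) - t i) ≤
            (volume (E ∩ Set.Icc (t i) (t (i + 1)))).toReal) ∧
          (∀ i : ℕ, t (i + 1) - t i ≤ C₀ * (t (i + 2) - t (i + 1))) := by
  have hmem : ∀ᵐ ttilde ∂(volume.restrict E), ttilde ∈ E :=
    ae_restrict_mem hE_meas
  have hne0 : ∀ᵐ ttilde ∂(volume.restrict E), ttilde ≠ 0 := by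
    have h0 : (volume.restrict E) {(0 : ℝ)} = 0 := by
      refine le_antisymm ?_ zero_le
      calc (volume.restrict E) {(0:ℝ)} ≤ volume {(0:ℝ)} :=
            Measure.restrict_le_self _
        _ = 0 := Real.volume_singleton
    rw [ae_iff]
    refine measure_mono_null ?_ h0
    intro y hy
    simp only [Set.mem_setOf_eq, not_not] at hy
    simp [hy]
  have hdens := Besicovitch.ae_tendsto_measure_inter_div (volume : Measure ℝ) E
  filter_upwards [hmem, hne0, hdens] with x hxE hx0 hxd
  -- x > 0
  have hx_mem := hE_sub hxE
  have hxpos : 0 < x := lt_of_le_of_ne hx_mem.1 (Ne.symm hx0)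
  have hxT : x ≤ T := hx_mem.2
  -- density > 7/8 eventually
  have h78 : (7/8 : ℝ≥0∞) < 1 := by
    rw [ENNReal.div_lt_iff (by norm_num) (by norm_num)]; norm_num
  have hev : ∀ᶠ r in nhdsWithin 0 (Set.Ioi (0:ℝ)),
      (7/8 : ℝ≥0∞) < volume (E ∩ Metric.closedBall x r) / volume (Metric.closedBall x r) :=
    hxd.eventually (eventually_gt_nhds h78)
  rw [Filter.eventually_iff, mem_nhdsGT_iff_exists_Ioc_subset] at hev
  obtain ⟨u, hu, huIoc⟩ := hev
  set h₀ : ℝ := min u x with hh₀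
  have hupos : 0 < u := hu
  have hh₀pos : 0 < h₀ := lt_min hupos hxpos
  have hh₀x : h₀ ≤ x := min_le_right _ _
  -- key estimate on complements
  have key : ∀ r : ℝ, 0 < r → r ≤ h₀ →
      volume (Set.Icc (x - r) x \ E) ≤ ENNReal.ofReal (r/4) := by
    intro r hr hrh
    have hrIoc : r ∈ Set.Ioc (0:ℝ) u := ⟨hr, hrh.trans (min_le_left _ _)⟩
    have hratio := huIoc hrIoc
    have hB : volume (Metric.closedBall x r) = ENNReal.ofReal (2 * r) :=
      Real.volume_closedBall x r
    have hBne : volume (Metric.closedBall x r) ≠ 0 := by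
      rw [hB]; simp [ENNReal.ofReal_eq_zero]; linarith
    have hBfin : volume (Metric.closedBall x r) ≠ ⊤ := by
      rw [hB]; exact ENNReal.ofReal_ne_top
    have hineq : (7/8 : ℝ≥0∞) * volume (Metric.closedBall x r)
        ≤ volume (E ∩ Metric.closedBall x r) := by
      rw [← ENNReal.le_div_iff_mul_le (Or.inl hBne) (Or.inl hBfin)]
      exact hratio.le
    have hsub : Set.Icc (x - r) x \ E ⊆ Metric.closedBall x r \ (E ∩ Metric.closedBall x r) := by
      intro y hy
      have hyB : y ∈ Metric.closedBall x r := by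
        rw [Real.closedBall_eq_Icc]
        exact ⟨hy.1.1, hy.1.2.trans (by linarith)⟩
      exact ⟨hyB, fun h => hy.2 h.1⟩
    calc volume (Set.Icc (x - r) x \ E)
        ≤ volume (Metric.closedBall x r \ (E ∩ Metric.closedBall x r)) :=
          measure_mono hsub
      _ = volume (Metric.closedBall x r) - volume (E ∩ Metric.closedBall x r) := by
          rw [measure_diff Set.inter_subset_right
            ((hE_meas.inter (measurableSet_closedBall)).nullMeasurableSet)
            (ne_top_of_le_ne_top hBfin (measure_mono Set.inter_subset_right))]
      _ ≤ volume (Metric.closedBall x r) - (7/8 : ℝ≥0∞) * volume (Metric.closedBall x r) :=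
          tsub_le_tsub_left hineq _
      _ = ENNReal.ofReal (r/4) := by
          rw [hB]
          have : (7/8 : ℝ≥0∞) = ENNReal.ofReal (7/8) := by
            rw [ENNReal.ofReal_div_of_pos (by norm_num)]; norm_num
          rw [this, ← ENNReal.ofReal_mul (by norm_num), ← ENNReal.ofReal_sub _ (by positivity)]
          ring_nf
  -- the sequence
  refine ⟨1/2, 2, by norm_num, by norm_num, fun i => x - h₀ * (1/2)^i, ?_, ?_, ?_, ?_, ?_, ?_⟩
  · intro i j hij
    have : (1/2:ℝ)^j < (1/2)^i := pow_lt_pow_right_of_lt_one₀ (by norm_num) (by norm_num) hij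
    nlinarith
  · intro i
    have h1 : (1/2:ℝ)^i ≤ 1 := pow_le_one₀ (by norm_num) (by norm_num)
    have h2 : (0:ℝ) < (1/2:ℝ)^i := by positivity
    constructor
    · nlinarith
    · nlinarith
  · intro i
    have h2 : (0:ℝ) < (1/2:ℝ)^i := by positivity
    nlinarith
  · have : Filter.Tendsto (fun i : ℕ => h₀ * (1/2:ℝ)^i) Filter.atTop (nhds 0) := by
      simpa using (tendsto_pow_atTop_nhds_zero_of_lt_one (by norm_num : (0:ℝ) ≤ 1/2)
        (by norm_num : (1/2:ℝ) < 1)).const_mul h₀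
    simpa using tendsto_const_nhds.sub this
  · intro i
    set a := x - h₀ * (1/2:ℝ)^i with ha
    set b := x - h₀ * (1/2:ℝ)^(i+1) with hb
    set r := h₀ * (1/2:ℝ)^i with hr
    have hrpos : 0 < r := by positivity
    have hrh : r ≤ h₀ := by
      have : (1/2:ℝ)^i ≤ 1 := pow_le_one₀ (by norm_num) (by norm_num)
      nlinarith
    have hba : b - a = r / 2 := by
      rw [hb, ha, hr]; ring_nf
    have hab : a ≤ b := by rw [ha, hb]; nlinarith [pow_pos (by norm_num : (0:ℝ) < 1/2) i]
    have hbx : b ≤ x := by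
      have : (0:ℝ) < (1/2:ℝ)^(i+1) := by positivity
      rw [hb]; nlinarith
    have hsub2 : Set.Icc a b \ (Set.Icc (x - r) x \ E) ⊆ E ∩ Set.Icc a b := by
      intro y hy
      refine ⟨?_, hy.1⟩
      by_contra hyE
      exact hy.2 ⟨⟨hy.1.1, hy.1.2.trans hbx⟩, hyE⟩
    have hIab : volume (Set.Icc a b) = ENNReal.ofReal (b - a) := Real.volume_Icc
    have hlow : ENNReal.ofReal ((b - a)/2) ≤ volume (E ∩ Set.Icc a b) := by
      calc ENNReal.ofReal ((b-a)/2)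
          = ENNReal.ofReal (b - a) - ENNReal.ofReal (r/4) := by
            rw [← ENNReal.ofReal_sub _ (by positivity)]
            congr 1; rw [hba]; ring
        _ ≤ volume (Set.Icc a b) - volume (Set.Icc (x - r) x \ E) := by
            rw [hIab]; exact tsub_le_tsub_left (key r hrpos hrh) _
        _ ≤ volume (Set.Icc a b \ (Set.Icc (x - r) x \ E)) := le_measure_diff
        _ ≤ volume (E ∩ Set.Icc a b) := measure_mono hsub2
    have hfin : volume (E ∩ Set.Icc a b) ≠ ⊤ :=
      ne_top_of_le_ne_top measure_Icc_lt_top.ne (measure_mono Set.inter_subset_right)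
    have := (ENNReal.ofReal_le_iff_le_toReal hfin).mp hlow
    linarith [this]
  · intro i
    simp only
    have e1 : h₀ * (1/2:ℝ)^(i+1) = h₀ * (1/2)^i / 2 := by rw [pow_succ]; ring
    have e2 : h₀ * (1/2:ℝ)^(i+2) = h₀ * (1/2)^(i+1) / 2 := by rw [pow_succ]; ring
    linarith
end

section
/- Let C₀ ≥ 1, 0 < b ≤ 1, C̃ > C₀² and C₂ > 0. Set r_N = ((2/b)·C̃^{N−1})⁴ for integers N ≥ 1, and define α₁ = exp(C₂·√(r₁)) and α_N = exp(C₂·√(r_N))·exp(−2·r_{N−1}·b·C₀^{−2(N−2)}) for N ≥ 2. Then the sequence (C̃^{N(N−1)}·α₁·α₂⋯α_N)_{N ≥ 1} is bounded: there exists L > 0 such that C̃^{N(N−1)}·∏_{k=1}^{N} α_k ≤ L for every integer N ≥ 1. -/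
/-!
Writing `a N = C̃^{N(N-1)} α₁ ⋯ α_N`, the ratio `a (N+1) / a N = C̃^{2N} α_{N+1}` equals
`exp (2N log C̃ + C₂ (2/b)² C̃^{2N} - (32/b³) (C̃⁴/C₀²)^{N-1})`. Since `C̃ > C₀² ≥ 1` gives
`C̃⁴/C₀² > C̃² > 1`, the negative geometric term dominates the linear and the slower geometric
one, so the ratio is eventually at most `1`, and an eventually non-increasing sequence is bounded.
-/

open Filter Asymptotics Real

lemma bddAbove_range_of_eventually_succ_le {α : Type*} [SemilatticeSup α] {f : ℕ → α}
    (h : ∀ᶠ n in atTop, f (n + 1) ≤ f n) : BddAbove (Set.range f) := by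
  have : Nonempty α := ⟨f 0⟩
  obtain ⟨N, hN⟩ := eventually_atTop.1 h
  obtain ⟨M, hM⟩ := ((Set.finite_Iic N).image f).bddAbove
  have hfN : f N ≤ M := hM ⟨N, Set.self_mem_Iic, rfl⟩
  refine ⟨M, ?_⟩
  rintro _ ⟨n, rfl⟩
  rcases le_total n N with hn | hn
  · exact hM ⟨n, Set.mem_Iic.2 hn, rfl⟩
  · exact (antitoneOn_nat_Ici_of_succ_le hN Set.self_mem_Ici hn hn).trans hfN

lemma eventually_affine_add_mul_pow_le_mul_pow {u v : ℝ} (hu : 0 ≤ u) (huv : u < v) (hv : 1 < v)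
    (c₀ c₁ c₂ : ℝ) {E : ℝ} (hE : 0 < E) :
    ∀ᶠ m : ℕ in atTop, c₀ + c₁ * m + c₂ * u ^ m ≤ E * v ^ m := by
  have h : (fun m : ℕ => c₀ + c₁ * m + c₂ * u ^ m) =o[atTop] (fun m => v ^ m) := by
    refine (IsLittleO.add ?_ ?_).add ((isLittleO_pow_pow_of_lt_left hu huv).const_mul_left c₂)
    · exact isLittleO_const_left.2 <| .inr <| tendsto_norm_atTop_atTop.comp <|
        tendsto_pow_atTop_atTop_of_one_lt hv
    · exact (isLittleO_coe_const_pow_of_one_lt hv).const_mul_left c₁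
  filter_upwards [h.bound hE] with m hm
  calc c₀ + c₁ * m + c₂ * u ^ m ≤ ‖c₀ + c₁ * m + c₂ * u ^ m‖ := le_norm_self _
    _ ≤ E * ‖v ^ m‖ := hm
    _ = E * v ^ m := by rw [Real.norm_of_nonneg (by positivity)]

lemma pow_mul_alpha_eq_exp {C₀ b Ct C₂ : ℝ} (hCt : 0 < Ct) {r : ℕ → ℝ}
    (hr : ∀ N : ℕ, 1 ≤ N → r N = ((2 / b) * Ct ^ (N - 1)) ^ 4) {α : ℕ → ℝ}
    (hα : ∀ N : ℕ, 2 ≤ N → α N =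
      Real.exp (C₂ * Real.sqrt (r N)) *
        Real.exp (-(2 * r (N - 1) * b * C₀ ^ (-(2 * ((N : ℤ) - 2)))))) (m : ℕ) :
    Ct ^ (2 * (m + 1)) * α (m + 2) = exp (2 * log Ct + 2 * log Ct * m +
      C₂ * (2 / b) ^ 2 * Ct ^ 2 * (Ct ^ 2) ^ m - 2 * b * (2 / b) ^ 4 * (Ct ^ 4 / C₀ ^ 2) ^ m) := by
  have hpred : m + 2 - 1 = m + 1 := rfl
  have hsqrt : √(r (m + 2)) = (2 / b) ^ 2 * Ct ^ 2 * (Ct ^ 2) ^ m := by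
    rw [hr _ (by omega), hpred, show ((2 / b) * Ct ^ (m + 1)) ^ 4
      = ((2 / b) ^ 2 * Ct ^ 2 * (Ct ^ 2) ^ m) ^ 2 by ring]
    exact sqrt_sq (by positivity)
  have hzpow : C₀ ^ (-(2 * (((m + 2 : ℕ) : ℤ) - 2))) = ((C₀ ^ 2) ^ m)⁻¹ := by
    rw [show -(2 * (((m + 2 : ℕ) : ℤ) - 2)) = -((2 * m : ℕ) : ℤ) by push_cast; ring,
      zpow_neg, zpow_natCast, pow_mul]
  have hpow : Ct ^ (2 * (m + 1)) = exp (2 * log Ct + 2 * log Ct * m) := by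
    rw [← mul_one_add, ← exp_log (pow_pos hCt _), log_pow]
    congr 1; push_cast; ring
  rw [hα _ (by omega), hsqrt, hpred, hr _ (by omega), Nat.add_sub_cancel, hzpow, hpow,
    ← exp_add, ← exp_add]
  congr 1
  ring

lemma eventually_pow_mul_alpha_le_one {C₀ b Ct C₂ : ℝ} (hC₀ : 1 ≤ C₀) (hb : 0 < b)
    (hCt : C₀ ^ 2 < Ct) {r : ℕ → ℝ}
    (hr : ∀ N : ℕ, 1 ≤ N → r N = ((2 / b) * Ct ^ (N - 1)) ^ 4) {α : ℕ → ℝ}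
    (hα : ∀ N : ℕ, 2 ≤ N → α N =
      Real.exp (C₂ * Real.sqrt (r N)) *
        Real.exp (-(2 * r (N - 1) * b * C₀ ^ (-(2 * ((N : ℤ) - 2)))))) :
    ∀ᶠ m : ℕ in atTop, Ct ^ (2 * (m + 1)) * α (m + 2) ≤ 1 := by
  have hCt1 : 1 < Ct := by nlinarith
  have hCt2 : Ct ^ 2 < Ct ^ 4 / C₀ ^ 2 := by
    have hC₀Ct : C₀ ^ 2 < Ct ^ 2 := by nlinarith
    rw [lt_div_iff₀ (by positivity)]
    nlinarith [mul_lt_mul_of_pos_left hC₀Ct (by positivity : (0 : ℝ) < Ct ^ 2)]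
  filter_upwards [eventually_affine_add_mul_pow_le_mul_pow (by positivity) hCt2 (by nlinarith)
    (2 * log Ct) (2 * log Ct) (C₂ * (2 / b) ^ 2 * Ct ^ 2) (show 0 < 2 * b * (2 / b) ^ 4 by positivity)]
    with m hm
  rw [pow_mul_alpha_eq_exp (by positivity) hr hα, exp_le_one_iff]
  linarith

theorem cost_sequence_bounded_general
    (C₀ b Ct C₂ : ℝ) (hC₀ : 1 ≤ C₀) (hb0 : 0 < b)
    (hCt : C₀ ^ 2 < Ct)
    (r : ℕ → ℝ) (hr : ∀ N : ℕ, 1 ≤ N → r N = ((2 / b) * Ct ^ (N - 1)) ^ 4)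
    (α : ℕ → ℝ)
    (hα1 : α 1 = Real.exp (C₂ * Real.sqrt (r 1)))
    (hα : ∀ N : ℕ, 2 ≤ N → α N =
      Real.exp (C₂ * Real.sqrt (r N)) *
        Real.exp (-(2 * r (N - 1) * b * C₀ ^ (-(2 * ((N : ℤ) - 2)))))) :
    ∃ L : ℝ, 0 < L ∧ ∀ N : ℕ, 1 ≤ N →
      Ct ^ (N * (N - 1)) * ∏ k ∈ Finset.Icc 1 N, α k ≤ L := by
  have hCt0 : 0 < Ct := by nlinarith
  have hα_pos : ∀ k, 1 ≤ k → 0 < α k := by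
    rintro (_ | _ | k) hk
    · omega
    · rw [hα1]; positivity
    · rw [hα _ (by omega)]; positivity
  set f : ℕ → ℝ := fun m => Ct ^ ((m + 1) * m) * ∏ k ∈ Finset.Icc 1 (m + 1), α k with hf
  have hf_nonneg : ∀ m, 0 ≤ f m := fun m =>
    mul_nonneg (by positivity) (Finset.prod_nonneg fun k hk => (hα_pos k (Finset.mem_Icc.1 hk).1).le)
  have hf_succ : ∀ m, f (m + 1) = f m * (Ct ^ (2 * (m + 1)) * α (m + 2)) := by
    intro m
    simp only [hf, Finset.prod_Icc_succ_top (show 1 ≤ m + 2 by omega),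
      show (m + 1 + 1) * (m + 1) = (m + 1) * m + 2 * (m + 1) by ring, pow_add]
    ring
  have hratio := eventually_pow_mul_alpha_le_one hC₀ hb0 hCt hr hα
  obtain ⟨M, hM⟩ := bddAbove_range_of_eventually_succ_le (f := f) <| hratio.mono fun m hm => by
    rw [hf_succ]; exact mul_le_of_le_one_right (hf_nonneg m) hm
  refine ⟨max M 1, by positivity, fun N hN => ?_⟩
  obtain ⟨m, rfl⟩ := Nat.exists_eq_add_of_le' hN
  simpa [hf] using (hM ⟨m, rfl⟩).trans (le_max_left M 1)

/-- Boundedness of the sequence C̃^{N(N-1)}·α₁·α₂⋯α_N appearing in (2.19)-(2.20). -/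
theorem cost_sequence_bounded
    (C₀ b Ct C₂ : ℝ) (hC₀ : 1 ≤ C₀) (hb0 : 0 < b) (hb1 : b ≤ 1)
    (hCt : C₀ ^ 2 < Ct) (hC₂ : 0 < C₂)
    (r : ℕ → ℝ) (hr : ∀ N : ℕ, 1 ≤ N → r N = ((2 / b) * Ct ^ (N - 1)) ^ 4)
    (α : ℕ → ℝ)
    (hα1 : α 1 = Real.exp (C₂ * Real.sqrt (r 1)))
    (hα : ∀ N : ℕ, 2 ≤ N → α N =
      Real.exp (C₂ * Real.sqrt (r N)) *
        Real.exp (-(2 * r (N - 1) * b * C₀ ^ (-(2 * ((N : ℤ) - 2)))))) :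
    ∃ L : ℝ, 0 < L ∧ ∀ N : ℕ, 1 ≤ N →
      Ct ^ (N * (N - 1)) * ∏ k ∈ Finset.Icc 1 N, α k ≤ L :=
  cost_sequence_bounded_general C₀ b Ct C₂ hC₀ hb0 hCt r hr α hα1 hα
end

section
/- Let T > 0, let F ⊆ [0,T] be Lebesgue measurable, let u : [0,T] → H be measurable and essentially bounded, let y₀ ∈ H, and let y(t) = G(t)y₀ + ∫₀^t G(t−s)·χ_F(s)·B(u(s)) ds for t ∈ [0,T]. Then for every t ∈ [0,T], ‖y(t)‖² ≤ ‖y₀‖² + (1/λ₁)·∫₀^t ‖u(s)‖² ds, where λ₁ is the smallest of the eigenvalues λ_i. (Energy estimate for the controlled heat equation.) -/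
open MeasureTheory
open scoped RealInnerProductSpace
open MeasureTheory
open scoped RealInnerProductSpace

lemma semigroup_decay
    {H : Type*} [NormedAddCommGroup H] [InnerProductSpace ℝ H] [CompleteSpace H]
    (X : HilbertBasis ℕ ℝ H) (lam : ℕ → ℝ)
    (hlam_pos : ∀ i, 0 < lam i) (hlam_mono : Monotone lam)
    (G : ℝ → H → H)
    (hG : ∀ t x, G t x = ∑' i : ℕ, (Real.exp (-(lam i) * t) * ⟪x, X i⟫) • X i)
    {t : ℝ} (ht : 0 ≤ t) (x : H) :
    ‖G t x‖ ≤ Real.exp (-(lam 0) * t) * ‖x‖ := by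
  set c : ℕ → ℝ := fun i => Real.exp (-(lam i) * t) * ⟪x, X i⟫ with hc_def
  have hrx : ∀ i, X.repr x i = ⟪x, X i⟫ := fun i => by
    rw [X.repr_apply_apply, real_inner_comm]
  have hexp_le : ∀ i, Real.exp (-(lam i) * t) ≤ Real.exp (-(lam 0) * t) := by
    intro i
    apply Real.exp_le_exp.2
    have := hlam_mono (Nat.zero_le i)
    nlinarith
  have hexp_pos : ∀ i, (0:ℝ) < Real.exp (-(lam i) * t) := fun i => Real.exp_pos _
  have hexp_le_one : ∀ i, Real.exp (-(lam i) * t) ≤ 1 := by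
    intro i
    apply Real.exp_le_one_iff.2
    nlinarith [hlam_pos i]
  have hsum_x : Summable (fun i => ‖X.repr x i‖ ^ ((2:ENNReal).toReal)) :=
    (lp.memℓp (X.repr x)).summable (by norm_num)
  have hpow : ∀ a : ℝ, ‖a‖ ^ ((2:ENNReal).toReal) = a * a := by
    intro a
    rw [show ((2:ENNReal).toReal) = ((2:ℕ):ℝ) by norm_num, Real.rpow_natCast]
    rw [Real.norm_eq_abs]
    rw [show |a| ^ 2 = |a| * |a| by ring, abs_mul_abs_self]
  have hsum_x2 : Summable (fun i => X.repr x i * X.repr x i) := by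
    simpa only [hpow] using hsum_x
  have hcle : ∀ i, ‖c i‖ ≤ ‖X.repr x i‖ := by
    intro i
    rw [hrx i, hc_def]
    simp only [Real.norm_eq_abs, abs_mul, Real.abs_exp]
    nlinarith [abs_nonneg (⟪x, X i⟫), hexp_le_one i, hexp_pos i]
  have hc : Memℓp c 2 := by
    apply memℓp_gen
    apply Summable.of_nonneg_of_le (fun i => by positivity) _ hsum_x
    intro i
    exact Real.rpow_le_rpow (norm_nonneg _) (hcle i) (by norm_num)
  set fc : lp (fun _ : ℕ => ℝ) 2 := ⟨c, hc⟩ with hfc_def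
  have hGx : G t x = X.repr.symm fc := by
    rw [hG t x]
    exact (X.hasSum_repr_symm fc).tsum_eq
  have hnorm : ‖G t x‖ = ‖fc‖ := by rw [hGx]; exact (X.repr.symm.norm_map fc)
  have hfc_sq : ‖fc‖ ^ 2 = ∑' i, c i * c i := by
    rw [← real_inner_self_eq_norm_sq]
    rw [lp.inner_eq_tsum]
    rfl
  have hx_sq : ‖x‖ ^ 2 = ∑' i, X.repr x i * X.repr x i := by
    rw [← X.repr.norm_map x, ← real_inner_self_eq_norm_sq, lp.inner_eq_tsum]
    rfl
  have hsum_c : Summable (fun i => c i * c i) := by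
    have := hc.summable (p := 2) (by norm_num)
    simpa only [hpow] using this
  have hterm : ∀ i, c i * c i ≤ (Real.exp (-(lam 0) * t))^2 * (X.repr x i * X.repr x i) := by
    intro i
    rw [hc_def, hrx i]
    have h1 := hexp_le i
    have h2 := (hexp_pos i).le
    have h3 : Real.exp (-lam i*t) * Real.exp (-lam i*t)
        ≤ Real.exp (-lam 0*t) * Real.exp (-lam 0*t) :=
      mul_le_mul h1 h1 h2 (Real.exp_pos _).le
    beta_reduce
    nlinarith [sq_nonneg (⟪x, X i⟫), h3]
  have hle : ‖fc‖ ^ 2 ≤ (Real.exp (-(lam 0) * t))^2 * ‖x‖^2 := by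
    rw [hfc_sq, hx_sq, ← tsum_mul_left]
    exact Summable.tsum_le_tsum hterm hsum_c (hsum_x2.mul_left _)
  have h := Real.sqrt_le_sqrt hle
  rw [Real.sqrt_sq (norm_nonneg _)] at h
  calc ‖G t x‖ = ‖fc‖ := hnorm
    _ ≤ _ := by
        rw [show (Real.exp (-(lam 0) * t))^2 * ‖x‖^2 = (Real.exp (-(lam 0)*t) * ‖x‖)^2 by ring,
          Real.sqrt_sq (by positivity)] at h
        exact h

lemma cs_sq {μ : Measure ℝ} [IsFiniteMeasure μ] {f g : ℝ → ℝ}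
    (hf : MemLp f 2 μ) (hg : MemLp g 2 μ)
    (hf0 : ∀ x, 0 ≤ f x) (hg0 : ∀ x, 0 ≤ g x) :
    (∫ s, f s * g s ∂μ) ^ 2 ≤ (∫ s, f s ^ 2 ∂μ) * (∫ s, g s ^ 2 ∂μ) := by
  have hpq : (2:ℝ).HolderConjugate 2 := Real.HolderConjugate.two_two
  have h2 : ENNReal.ofReal (2:ℝ) = 2 := by
    rw [show (2:ℝ) = ((2:ℕ):ℝ) by norm_num, ENNReal.ofReal_natCast]; norm_num
  have h := integral_mul_le_Lp_mul_Lq_of_nonneg hpq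
    (Filter.Eventually.of_forall hf0) (Filter.Eventually.of_forall hg0)
    (by rw [h2]; exact hf) (by rw [h2]; exact hg)
  have hrpow : ∀ (F : ℝ → ℝ), (∫ s, F s ^ (2:ℝ) ∂μ) = ∫ s, F s ^ 2 ∂μ := by
    intro F
    congr 1
    funext s
    rw [show (2:ℝ) = ((2:ℕ):ℝ) by norm_num, Real.rpow_natCast]
  rw [hrpow, hrpow] at h
  have hfint : 0 ≤ ∫ s, f s ^ 2 ∂μ := integral_nonneg fun s => by positivity
  have hgint : 0 ≤ ∫ s, g s ^ 2 ∂μ := integral_nonneg fun s => by positivity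
  have h0 : 0 ≤ ∫ s, f s * g s ∂μ :=
    integral_nonneg fun s => mul_nonneg (hf0 s) (hg0 s)
  have hsq := pow_le_pow_left₀ h0 h 2
  refine hsq.trans_eq ?_
  rw [mul_pow]
  have hhalf : ∀ a : ℝ, 0 ≤ a → (a ^ ((1:ℝ)/2)) ^ 2 = a := by
    intro a ha
    rw [← Real.rpow_natCast (a ^ ((1:ℝ)/2)) 2, ← Real.rpow_mul ha]
    norm_num
  rw [hhalf _ hfint, hhalf _ hgint]

/-- Energy estimate for the controlled heat equation:
‖y(t)‖² ≤ ‖y₀‖² + (1/λ₁)·∫₀^t ‖u(s)‖² ds, where λ₁ = lam 0 is the smallest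
eigenvalue (the sequence lam is nondecreasing). -/
theorem energy_estimate_controlled_heat
    {H : Type*} [NormedAddCommGroup H] [InnerProductSpace ℝ H] [CompleteSpace H]
    [MeasurableSpace H] [BorelSpace H]
    (X : HilbertBasis ℕ ℝ H) (lam : ℕ → ℝ)
    (hlam_pos : ∀ i, 0 < lam i) (hlam_mono : Monotone lam)
    (hlam_tendsto : Filter.Tendsto lam Filter.atTop Filter.atTop)
    (G : ℝ → H → H)
    (hG : ∀ t x, G t x = ∑' i : ℕ, (Real.exp (-(lam i) * t) * ⟪x, X i⟫) • X i)
    (B : H →L[ℝ] H) (hB : ∀ x, ‖B x‖ ≤ ‖x‖)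
    (T : ℝ) (hT : 0 < T) (F : Set ℝ) (hF_meas : MeasurableSet F)
    (u : ℝ → H) (hu_meas : Measurable u)
    (M : ℝ) (hu_bdd : ∀ᵐ t ∂(volume.restrict (Set.Icc (0 : ℝ) T)), ‖u t‖ ≤ M)
    (y₀ : H) (y : ℝ → H)
    (hy : ∀ t, y t = G t y₀ + ∫ s in Set.Ioc (0 : ℝ) t,
      G (t - s) ((Set.indicator F (fun _ => (1 : ℝ)) s) • B (u s))) :
    ∀ t ∈ Set.Icc (0 : ℝ) T,
      ‖y t‖ ^ 2 ≤ ‖y₀‖ ^ 2 + (1 / lam 0) * ∫ s in Set.Ioc (0 : ℝ) t, ‖u s‖ ^ 2 := by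
  intro t ht
  obtain ⟨ht0, htT⟩ := ht
  have hlam0 : 0 < lam 0 := hlam_pos 0
  have hv_norm : ∀ s : ℝ, ‖(Set.indicator F (fun _ => (1 : ℝ)) s) • B (u s)‖ ≤ ‖u s‖ := by
    intro s
    rw [norm_smul]
    by_cases hs : s ∈ F
    · simp only [Set.indicator_of_mem hs, norm_one, one_mul]
      exact hB (u s)
    · simp [Set.indicator_of_notMem hs]
  rcases eq_or_lt_of_le ht0 with h0 | h0
  · -- t = 0
    subst h0
    have hempty : Set.Ioc (0:ℝ) 0 = ∅ := Set.Ioc_self _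
    rw [hy 0, hempty]
    simp only [Measure.restrict_empty, integral_zero_measure, add_zero, mul_zero]
    have hd := semigroup_decay X lam hlam_pos hlam_mono G hG le_rfl y₀
    rw [mul_zero, Real.exp_zero, one_mul] at hd
    nlinarith [norm_nonneg (G 0 y₀), norm_nonneg y₀]
  · -- t > 0
    set θ := Real.exp (-(lam 0) * t) with hth_def
    have hth0 : 0 < θ := Real.exp_pos _
    have hth1 : θ < 1 := by
      rw [hth_def]
      apply Real.exp_lt_one_iff.2
      nlinarith
    set w : ℝ → ℝ := fun s => Real.exp (-(lam 0) * (t - s)) with hw_def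
    have hw_pos : ∀ s, 0 < w s := fun s => Real.exp_pos _
    have hw_le1 : ∀ s ∈ Set.Ioc (0:ℝ) t, w s ≤ 1 := by
      intro s hs
      apply Real.exp_le_one_iff.2
      nlinarith [hs.2]
    have hw_cont : Continuous w := Real.continuous_exp.comp (by fun_prop)
    have hu_bdd' : ∀ᵐ s ∂(volume.restrict (Set.Ioc (0:ℝ) t)), ‖u s‖ ≤ M :=
      ae_restrict_of_ae_restrict_of_subset
        (fun s hs => by
          rcases Set.mem_Ioc.1 hs with ⟨h1, h2⟩
          exact Set.mem_Icc.2 ⟨h1.le, h2.trans htT⟩) hu_bdd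
    have hg_int : Integrable (fun s => w s * ‖u s‖)
        (volume.restrict (Set.Ioc (0:ℝ) t)) := by
      apply (integrable_const M).mono'
        ((hw_cont.measurable.mul hu_meas.norm).aestronglyMeasurable)
      filter_upwards [hu_bdd', ae_restrict_mem measurableSet_Ioc] with s hsM hs
      have h1 := hw_le1 s hs
      have h2 := (hw_pos s).le
      rw [Real.norm_eq_abs, Pi.mul_apply, abs_of_nonneg (mul_nonneg h2 (norm_nonneg _))]
      nlinarith [norm_nonneg (u s)]
    have hI_int : Integrable (fun s => ‖u s‖ ^ 2)
        (volume.restrict (Set.Ioc (0:ℝ) t)) := by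
      apply (integrable_const (M ^ 2)).mono'
        ((hu_meas.norm.pow_const 2).aestronglyMeasurable)
      filter_upwards [hu_bdd'] with s hsM
      rw [Real.norm_eq_abs, abs_of_nonneg (by positivity)]
      nlinarith [norm_nonneg (u s)]
    have hI0 : 0 ≤ ∫ s in Set.Ioc (0:ℝ) t, ‖u s‖ ^ 2 :=
      integral_nonneg fun s => by positivity
    have hB'0 : 0 ≤ ∫ s in Set.Ioc (0:ℝ) t, w s * ‖u s‖ :=
      integral_nonneg fun s => mul_nonneg (hw_pos s).le (norm_nonneg _)
    -- Step A : pointwise bound on ‖y t‖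
    have hA : ‖y t‖ ≤ θ * ‖y₀‖ + ∫ s in Set.Ioc (0:ℝ) t, w s * ‖u s‖ := by
      rw [hy t]
      refine (norm_add_le _ _).trans (add_le_add ?_ ?_)
      · exact semigroup_decay X lam hlam_pos hlam_mono G hG ht0 y₀
      · refine (norm_integral_le_integral_norm _).trans ?_
        apply integral_mono_of_nonneg
          (Filter.Eventually.of_forall fun s => norm_nonneg _) hg_int
        filter_upwards [ae_restrict_mem measurableSet_Ioc] with s hs
        calc ‖G (t - s) ((Set.indicator F (fun _ => (1 : ℝ)) s) • B (u s))‖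
            ≤ Real.exp (-(lam 0) * (t - s)) *
                ‖(Set.indicator F (fun _ => (1 : ℝ)) s) • B (u s)‖ :=
              semigroup_decay X lam hlam_pos hlam_mono G hG (by linarith [hs.2]) _
          _ ≤ w s * ‖u s‖ :=
              mul_le_mul_of_nonneg_left (hv_norm s) (hw_pos s).le
    -- Step B : Cauchy–Schwarz
    set g1 : ℝ → ℝ := fun s => Real.exp (-(lam 0) * (t - s) / 2) with hg1_def
    have hg1_pos : ∀ s, 0 < g1 s := fun s => Real.exp_pos _
    have hg1_cont : Continuous g1 := Real.continuous_exp.comp (by fun_prop)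
    have hg1_le1 : ∀ s ∈ Set.Ioc (0:ℝ) t, g1 s ≤ 1 := by
      intro s hs
      apply Real.exp_le_one_iff.2
      nlinarith [hs.2]
    have hg1_mem : MemLp g1 2 (volume.restrict (Set.Ioc (0:ℝ) t)) := by
      apply MemLp.of_bound hg1_cont.aestronglyMeasurable 1
      filter_upwards [ae_restrict_mem measurableSet_Ioc] with s hs
      rw [Real.norm_eq_abs, abs_of_nonneg (hg1_pos s).le]
      exact hg1_le1 s hs
    have hg2_mem : MemLp (fun s => g1 s * ‖u s‖) 2
        (volume.restrict (Set.Ioc (0:ℝ) t)) := by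
      apply MemLp.of_bound
        ((hg1_cont.measurable.mul hu_meas.norm).aestronglyMeasurable) M
      filter_upwards [hu_bdd', ae_restrict_mem measurableSet_Ioc] with s hsM hs
      rw [Real.norm_eq_abs, Pi.mul_apply, abs_of_nonneg (mul_nonneg (hg1_pos s).le (norm_nonneg _))]
      nlinarith [norm_nonneg (u s), hg1_le1 s hs, (hg1_pos s).le]
    have hcs := cs_sq hg1_mem hg2_mem (fun s => (hg1_pos s).le)
      (fun s => mul_nonneg (hg1_pos s).le (norm_nonneg _))
    have e1 : ∀ s, g1 s * (g1 s * ‖u s‖) = w s * ‖u s‖ := by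
      intro s
      rw [hg1_def, hw_def]
      beta_reduce
      rw [← mul_assoc, ← Real.exp_add]
      congr 2
      ring
    have e2 : ∀ s, g1 s ^ 2 = w s := by
      intro s
      rw [hg1_def, hw_def]
      beta_reduce
      rw [sq, ← Real.exp_add]
      congr 1
      ring
    have e3 : ∀ s, (g1 s * ‖u s‖) ^ 2 = w s * ‖u s‖ ^ 2 := by
      intro s
      rw [mul_pow, e2]
    simp only [e1, e2, e3] at hcs
    -- hcs : (∫ w ‖u‖)^2 ≤ (∫ w) * (∫ w ‖u‖^2)
    -- Step C : value of ∫ w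
    have hW : ∫ s in Set.Ioc (0:ℝ) t, w s = (1 - θ) / lam 0 := by
      rw [← intervalIntegral.integral_of_le ht0]
      have hderiv : ∀ s ∈ Set.uIcc (0:ℝ) t,
          HasDerivAt (fun x : ℝ => Real.exp (-(lam 0) * (t - x)) / lam 0) (w s) s := by
        intro s _
        have hd1 : HasDerivAt (fun x : ℝ => -(lam 0) * (t - x)) (lam 0) s := by
          have h := ((hasDerivAt_id s).const_mul (lam 0)).sub_const (lam 0 * t)
          have he : (fun x : ℝ => -(lam 0) * (t - x)) = fun x => lam 0 * x - lam 0 * t := by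
            funext x; ring
          rw [he]
          simpa using h
        have hd2 := hd1.exp.div_const (lam 0)
        refine hd2.congr_deriv ?_
        rw [hw_def]
        beta_reduce
        field_simp
      rw [intervalIntegral.integral_eq_sub_of_hasDerivAt hderiv
        (hw_cont.intervalIntegrable 0 t)]
      rw [hth_def]
      rw [sub_self, mul_zero, Real.exp_zero, sub_zero]
      ring
    -- Step D : ∫ w ‖u‖² ≤ ∫ ‖u‖²
    have hJI : ∫ s in Set.Ioc (0:ℝ) t, w s * ‖u s‖ ^ 2
        ≤ ∫ s in Set.Ioc (0:ℝ) t, ‖u s‖ ^ 2 := by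
      apply integral_mono_of_nonneg
        (Filter.Eventually.of_forall fun s => by positivity) hI_int
      filter_upwards [ae_restrict_mem measurableSet_Ioc] with s hs
      nlinarith [hw_le1 s hs, (hw_pos s).le, sq_nonneg ‖u s‖]
    have hJ0 : 0 ≤ ∫ s in Set.Ioc (0:ℝ) t, w s * ‖u s‖ ^ 2 :=
      integral_nonneg fun s => by positivity
    -- Step E : conclude
    have hW0 : 0 ≤ (1 - θ) / lam 0 := div_nonneg (by linarith) hlam0.le
    have hkey : (∫ s in Set.Ioc (0:ℝ) t, w s * ‖u s‖) ^ 2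
        ≤ (1 - θ) * ((1 / lam 0) * ∫ s in Set.Ioc (0:ℝ) t, ‖u s‖ ^ 2) := by
      calc (∫ s in Set.Ioc (0:ℝ) t, w s * ‖u s‖) ^ 2
          ≤ (∫ s in Set.Ioc (0:ℝ) t, w s) * ∫ s in Set.Ioc (0:ℝ) t, w s * ‖u s‖ ^ 2 := hcs
        _ ≤ ((1 - θ) / lam 0) * ∫ s in Set.Ioc (0:ℝ) t, ‖u s‖ ^ 2 := by
            rw [hW]
            exact mul_le_mul_of_nonneg_left hJI hW0
        _ = (1 - θ) * ((1 / lam 0) * ∫ s in Set.Ioc (0:ℝ) t, ‖u s‖ ^ 2) := by ring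
    have hK0 : 0 ≤ (1 / lam 0) * ∫ s in Set.Ioc (0:ℝ) t, ‖u s‖ ^ 2 := by positivity
    have hsq := pow_le_pow_left₀ (norm_nonneg (y t)) hA 2
    set N := ‖y₀‖ with hN_def
    set B' := ∫ s in Set.Ioc (0:ℝ) t, w s * ‖u s‖ with hB'_def
    set K := (1 / lam 0) * ∫ s in Set.Ioc (0:ℝ) t, ‖u s‖ ^ 2 with hK_def
    have hN0 : 0 ≤ N := norm_nonneg _
    nlinarith [sq_nonneg ((1 - θ) * (θ * N) - θ * B'), hkey, hsq, hB'0, hN0, hK0,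
      mul_pos hth0 (by linarith : (0:ℝ) < 1 - θ),
      mul_nonneg (mul_nonneg hth0.le (by linarith : (0:ℝ) ≤ 1 - θ)) (sq_nonneg N)]
end

section
/- Assume the null controllability property (C) and that B is idempotent (B∘B = B). Let U be the closed ball of radius R > 0 centered at the origin of H, let y₀ ∈ H, let S ⊆ H be nonempty, and let T* > 0 together with u* ∈ U_ad be optimal. Then ‖B(u*(t))‖ = R for almost every t ∈ [0, T*]. -/
open MeasureTheory Metric

private lemma isClosed_image_closedBall
    {H : Type*} [NormedAddCommGroup H] [InnerProductSpace ℝ H] [CompleteSpace H]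
    (A : H →L[ℝ] H) (R : ℝ) :
    IsClosed (A '' Metric.closedBall 0 R) := by
  rcases le_or_gt 0 R with hR | hR
  swap
  · simp [Metric.closedBall_eq_empty.2 hR]
  apply isClosed_of_closure_subset
  intro y hy
  -- the nested convex closed sets
  set C : ℕ → Set H := fun n =>
    Metric.closedBall (0 : H) R ∩ A ⁻¹' Metric.closedBall y (1 / (n + 1)) with hC
  have hCne : ∀ n, (C n).Nonempty := by
    intro n
    have hpos : (0 : ℝ) < 1 / (n + 1) := by positivity
    obtain ⟨b, hb, hdist⟩ := Metric.mem_closure_iff.1 hy (1 / (n + 1)) hpos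
    obtain ⟨x, hx, rfl⟩ := hb
    exact ⟨x, hx, by simpa [Metric.mem_closedBall, dist_comm] using hdist.le⟩
  have hCcl : ∀ n, IsClosed (C n) :=
    fun n => Metric.isClosed_closedBall.inter (Metric.isClosed_closedBall.preimage A.continuous)
  have hCconv : ∀ n, Convex ℝ (C n) := by
    intro n
    refine (convex_closedBall _ _).inter ?_
    intro a ha b hb s t hs ht hst
    simp only [Set.mem_preimage] at *
    rw [map_add, A.map_smul, A.map_smul]
    exact (convex_closedBall y (1 / (n + 1))) ha hb hs ht hst
  have hCanti : ∀ {n m : ℕ}, n ≤ m → C m ⊆ C n := by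
    intro n m hnm
    refine Set.inter_subset_inter le_rfl (Set.preimage_mono ?_)
    apply Metric.closedBall_subset_closedBall
    have h1 : (0:ℝ) < n + 1 := by positivity
    have h2 : (n:ℝ) + 1 ≤ (m:ℝ) + 1 := by
      have : (n:ℝ) ≤ (m:ℝ) := Nat.cast_le.2 hnm
      linarith
    exact one_div_le_one_div_of_le h1 h2
  -- minimal norm elements
  have hmin := fun n => exists_norm_eq_iInf_of_complete_convex (hCne n)
    ((hCcl n).isComplete) (hCconv n) (0 : H)
  choose x hxC hxmin using hmin
  set d : ℕ → ℝ := fun n => ⨅ w : C n, ‖(w : H)‖ with hd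
  have hbdd : ∀ n, BddBelow (Set.range fun w : C n => ‖(w : H)‖) :=
    fun n => ⟨0, by rintro _ ⟨w, rfl⟩; positivity⟩
  have hd_le : ∀ n, ∀ z ∈ C n, d n ≤ ‖z‖ := by
    intro n z hz
    exact ciInf_le (hbdd n) (⟨z, hz⟩ : C n)
  have hxnorm : ∀ n, ‖x n‖ = d n := by
    intro n
    have h := hxmin n
    simp only [zero_sub, norm_neg] at h
    exact h
  have hd0 : ∀ n, 0 ≤ d n := fun n => (hxnorm n) ▸ norm_nonneg _
  have hdR : ∀ n, d n ≤ R := by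
    intro n
    rw [← hxnorm n]
    simpa using (hxC n).1
  have hdmono : Monotone d := by
    intro n m hnm
    calc d n ≤ ‖x m‖ := hd_le n (x m) (hCanti hnm (hxC m))
    _ = d m := hxnorm m
  -- parallelogram estimate
  have hkey : ∀ {n m : ℕ}, n ≤ m → ‖x n - x m‖ ^ 2 ≤ 2 * (d m ^ 2 - d n ^ 2) := by
    intro n m hnm
    have hmid : ((1:ℝ)/2) • x n + ((1:ℝ)/2) • x m ∈ C n :=
      (hCconv n) (hxC n) (hCanti hnm (hxC m)) (by norm_num) (by norm_num) (by norm_num)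
    have h1 : d n ≤ ‖((1:ℝ)/2) • x n + ((1:ℝ)/2) • x m‖ := hd_le n _ hmid
    have h2 : ‖((1:ℝ)/2) • x n + ((1:ℝ)/2) • x m‖ = ‖x n + x m‖ / 2 := by
      rw [← smul_add, norm_smul]
      simp [abs_of_nonneg]
      ring
    have hpar := parallelogram_law_with_norm ℝ (x n) (x m)
    have hxn : ‖x n‖ = d n := hxnorm n
    have hxm : ‖x m‖ = d m := hxnorm m
    have h3 : d n ≤ ‖x n + x m‖ / 2 := h2 ▸ h1
    have h4 : 0 ≤ ‖x n + x m‖ := norm_nonneg _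
    nlinarith [hd0 n, hd0 m, norm_nonneg (x n - x m)]
  -- Cauchy sequence
  have hdconv : ∃ l : ℝ, Filter.Tendsto d Filter.atTop (nhds l) :=
    ⟨⨆ n, d n, tendsto_atTop_ciSup hdmono ⟨R, by rintro _ ⟨n, rfl⟩; exact hdR n⟩⟩
  obtain ⟨l, hl⟩ := hdconv
  have hdsq : CauchySeq (fun n => d n ^ 2) := ((hl.pow 2)).cauchySeq
  have hcauchy : CauchySeq x := by
    rw [Metric.cauchySeq_iff]
    intro ε hε
    obtain ⟨N, hN⟩ := Metric.cauchySeq_iff.1 hdsq (ε ^ 2 / 2) (by positivity)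
    refine ⟨N, fun m hm n hn => ?_⟩
    have hsym : ∀ {a b : ℕ}, a ≤ b → dist (d b ^ 2) (d a ^ 2) < ε ^ 2 / 2 →
        dist (x a) (x b) < ε := by
      intro a b hab hd2
      have h1 := hkey hab
      rw [Real.dist_eq, abs_of_nonneg (by nlinarith [hdmono hab, hd0 a, hd0 b])] at hd2
      have h2 : ‖x a - x b‖ ^ 2 < ε ^ 2 := by nlinarith
      rw [dist_eq_norm]
      nlinarith [norm_nonneg (x a - x b)]
    rcases le_total m n with h | h
    · exact hsym h (hN n hn m hm)
    · rw [dist_comm]; exact hsym h (hN m hm n hn)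
  obtain ⟨xl, hxl⟩ := cauchySeq_tendsto_of_complete hcauchy
  have hxlC : ∀ n, xl ∈ C n := by
    intro n
    refine (hCcl n).mem_of_tendsto hxl ?_
    filter_upwards [Filter.eventually_ge_atTop n] with m hm
    exact hCanti hm (hxC m)
  have hxlball : ‖xl‖ ≤ R := by simpa using (hxlC 0).1
  have hAxl : A xl = y := by
    have hdist : ∀ n : ℕ, dist (A xl) y ≤ 1 / (n + 1) := by
      intro n
      simpa [Metric.mem_closedBall] using (hxlC n).2
    have : dist (A xl) y ≤ 0 := by
      refine ge_of_tendsto' (tendsto_one_div_add_atTop_nhds_zero_nat (𝕜 := ℝ)) fun n => hdist n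
    exact dist_le_zero.1 this
  exact ⟨xl, by simpa using hxlball, hAxl⟩

private lemma ae_shift_right {p : ℝ → Prop} (hp : MeasurableSet {t : ℝ | p t}) (δ : ℝ)
    (hδ : 0 ≤ δ) (h : ∀ᵐ t ∂(volume.restrict (Set.Ici (0 : ℝ))), p t) :
    ∀ᵐ s ∂(volume.restrict (Set.Ici (0 : ℝ))), p (s + δ) := by
  rw [ae_restrict_iff' measurableSet_Ici] at h ⊢
  rw [ae_iff] at h ⊢
  set N : Set ℝ := {t | ¬(t ∈ Set.Ici (0:ℝ) → p t)} with hN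
  have hNmeas : MeasurableSet N := by
    have : N = Set.Ici (0:ℝ) ∩ {t | p t}ᶜ := by
      ext t; simp [hN, Set.mem_Ici, and_comm]
    rw [this]
    exact measurableSet_Ici.inter hp.compl
  have hsub : {s : ℝ | ¬(s ∈ Set.Ici (0:ℝ) → p (s + δ))} ⊆ (fun s => s + δ) ⁻¹' N := by
    intro s hs
    simp only [Set.mem_setOf_eq, Classical.not_imp] at hs
    simp only [Set.mem_preimage, hN, Set.mem_setOf_eq, Classical.not_imp]
    refine ⟨?_, hs.2⟩
    have := hs.1
    simp only [Set.mem_Ici] at *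
    linarith
  refine measure_mono_null hsub ?_
  have : volume ((fun s => s + δ) ⁻¹' N) = volume N := by
    rw [← Measure.map_apply (measurable_add_const δ) hNmeas, map_add_right_eq_self]
  rw [this]; exact h

set_option maxHeartbeats 1000000 in
private lemma exists_invariant_projection
    {H : Type*} [NormedAddCommGroup H] [InnerProductSpace ℝ H] [CompleteSpace H]
    (G : ℝ → H →L[ℝ] H)
    (hGcont : ∀ x : H, ContinuousOn (fun t => G t x) (Set.Ici (0 : ℝ)))
    (B : H →L[ℝ] H) (y₀ c : H) :
    ∃ (K : Submodule ℝ H) (P : H →L[ℝ] H),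
      TopologicalSpace.IsSeparable (K : Set H) ∧
      y₀ ∈ K ∧ c ∈ K ∧
      (∀ t : ℝ, 0 ≤ t → ∀ x ∈ K, G t x ∈ K) ∧
      (∀ x : H, ‖P x‖ ≤ ‖x‖) ∧
      (∀ x ∈ K, P x = x) ∧
      (∀ x : H, P x ∈ K) ∧
      (∀ t : ℝ, 0 ≤ t → ∀ x : H, P (G t x) = G t (P x)) ∧
      (∀ x : H, P (B x) = B (P x)) := by
  classical
  set A : ℚ → (H →L[ℝ] H) := fun q => G (max (q : ℝ) 0) with hA
  set F : Set H → Set H := fun S =>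
    S ∪ Set.image2 (· + ·) S S ∪ (⋃ q : ℚ, (fun x : H => (q : ℝ) • x) '' S) ∪
      (⋃ q : ℚ, A q '' S) ∪ (⋃ q : ℚ, (ContinuousLinearMap.adjoint (A q)) '' S) ∪
      B '' S ∪ (ContinuousLinearMap.adjoint B) '' S with hF
  have hFsub : ∀ S : Set H, S ⊆ F S := by
    intro S x hx
    simp only [hF, Set.mem_union]
    tauto
  have hFcount : ∀ S : Set H, S.Countable → (F S).Countable := by
    intro S hS
    refine ((((((hS.union ?_).union ?_).union ?_).union ?_).union ?_).union ?_)
    · exact hS.image2 hS _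
    · exact Set.countable_iUnion fun q => hS.image _
    · exact Set.countable_iUnion fun q => hS.image _
    · exact Set.countable_iUnion fun q => hS.image _
    · exact hS.image _
    · exact hS.image _
  set T : Set H := ⋃ n, F^[n] {y₀, c} with hT
  have hchain : Monotone fun n => F^[n] {y₀, c} := by
    apply monotone_nat_of_le_succ
    intro n
    rw [Function.iterate_succ_apply']
    exact hFsub _
  have hTmem : ∀ x ∈ T, ∃ n, x ∈ F^[n] {y₀, c} := fun x hx => Set.mem_iUnion.1 hx
  have hTof : ∀ n, F^[n] {y₀, c} ⊆ T := fun n => Set.subset_iUnion (fun n => F^[n] {y₀, c}) n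
  have hTcount : T.Countable := by
    refine Set.countable_iUnion fun n => ?_
    induction n with
    | zero => simpa using Set.countable_insert y₀ (Set.countable_singleton c)
    | succ n ih => rw [Function.iterate_succ_apply']; exact hFcount _ ih
  have hTy₀ : y₀ ∈ T := hTof 0 (by simp)
  have hTc : c ∈ T := hTof 0 (by simp)
  have hTpair : ∀ x ∈ T, ∀ y ∈ T, ∃ n, x ∈ F^[n] {y₀, c} ∧ y ∈ F^[n] {y₀, c} := by
    intro x hx y hy
    obtain ⟨n, hn⟩ := hTmem x hx
    obtain ⟨m, hm⟩ := hTmem y hy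
    exact ⟨max n m, hchain (le_max_left n m) hn, hchain (le_max_right n m) hm⟩
  have hTadd : ∀ x ∈ T, ∀ y ∈ T, x + y ∈ T := by
    intro x hx y hy
    obtain ⟨n, hn, hm⟩ := hTpair x hx y hy
    refine hTof (n + 1) ?_
    rw [Function.iterate_succ_apply']
    have h : x + y ∈ Set.image2 (· + ·) (F^[n] {y₀, c}) (F^[n] {y₀, c}) :=
      Set.mem_image2_of_mem hn hm
    simp only [hF, Set.mem_union]
    tauto
  have hTsmul : ∀ (q : ℚ), ∀ x ∈ T, (q : ℝ) • x ∈ T := by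
    intro q x hx
    obtain ⟨n, hn⟩ := hTmem x hx
    refine hTof (n + 1) ?_
    rw [Function.iterate_succ_apply']
    have h : (q : ℝ) • x ∈ ⋃ q' : ℚ, (fun x : H => (q' : ℝ) • x) '' (F^[n] {y₀, c}) :=
      Set.mem_iUnion.2 ⟨q, Set.mem_image_of_mem _ hn⟩
    simp only [hF, Set.mem_union]
    tauto
  have hTA : ∀ (q : ℚ), ∀ x ∈ T, A q x ∈ T := by
    intro q x hx
    obtain ⟨n, hn⟩ := hTmem x hx
    refine hTof (n + 1) ?_
    rw [Function.iterate_succ_apply']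
    have h : A q x ∈ ⋃ q' : ℚ, A q' '' (F^[n] {y₀, c}) :=
      Set.mem_iUnion.2 ⟨q, Set.mem_image_of_mem _ hn⟩
    simp only [hF, Set.mem_union]
    tauto
  have hTAadj : ∀ (q : ℚ), ∀ x ∈ T, ContinuousLinearMap.adjoint (A q) x ∈ T := by
    intro q x hx
    obtain ⟨n, hn⟩ := hTmem x hx
    refine hTof (n + 1) ?_
    rw [Function.iterate_succ_apply']
    have h : ContinuousLinearMap.adjoint (A q) x
        ∈ ⋃ q' : ℚ, (ContinuousLinearMap.adjoint (A q')) '' (F^[n] {y₀, c}) :=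
      Set.mem_iUnion.2 ⟨q, Set.mem_image_of_mem _ hn⟩
    simp only [hF, Set.mem_union]
    tauto
  have hTB : ∀ x ∈ T, B x ∈ T := by
    intro x hx
    obtain ⟨n, hn⟩ := hTmem x hx
    refine hTof (n + 1) ?_
    rw [Function.iterate_succ_apply']
    have h : B x ∈ B '' (F^[n] {y₀, c}) := Set.mem_image_of_mem _ hn
    simp only [hF, Set.mem_union]
    tauto
  have hTBadj : ∀ x ∈ T, ContinuousLinearMap.adjoint B x ∈ T := by
    intro x hx
    obtain ⟨n, hn⟩ := hTmem x hx
    refine hTof (n + 1) ?_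
    rw [Function.iterate_succ_apply']
    have h : ContinuousLinearMap.adjoint B x
        ∈ (ContinuousLinearMap.adjoint B) '' (F^[n] {y₀, c}) := Set.mem_image_of_mem _ hn
    simp only [hF, Set.mem_union]
    tauto
  set C : Set H := closure T with hC
  have hCop : ∀ (O : H →L[ℝ] H), (∀ x ∈ T, O x ∈ T) → ∀ x ∈ C, O x ∈ C := by
    intro O hO x hx
    have h1 : O x ∈ O '' closure T := Set.mem_image_of_mem _ hx
    have h2 : O '' closure T ⊆ closure (O '' T) :=
      image_closure_subset_closure_image O.continuous
    have h3 : closure (O '' T) ⊆ closure T := by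
      apply closure_mono
      rintro _ ⟨y, hy, rfl⟩
      exact hO y hy
    exact h3 (h2 h1)
  have hCadd : ∀ x ∈ C, ∀ y ∈ C, x + y ∈ C := by
    intro x hx y hy
    rcases mem_closure_iff_seq_limit.1 hx with ⟨u, hu, hux⟩
    rcases mem_closure_iff_seq_limit.1 hy with ⟨v, hv, hvy⟩
    refine mem_closure_of_tendsto (hux.add hvy) ?_
    filter_upwards with n
    exact hTadd _ (hu n) _ (hv n)
  have hCsmulQ : ∀ (q : ℚ), ∀ x ∈ C, (q : ℝ) • x ∈ C := by
    intro q x hx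
    rcases mem_closure_iff_seq_limit.1 hx with ⟨u, hu, hux⟩
    refine mem_closure_of_tendsto (hux.const_smul ((q : ℝ))) ?_
    filter_upwards with n
    exact hTsmul q _ (hu n)
  have hratseq : ∀ r : ℝ, ∃ u : ℕ → ℚ, (∀ n, r < (u n : ℝ)) ∧
      Filter.Tendsto (fun n => ((u n : ℝ))) Filter.atTop (nhds r) := by
    intro r
    have hex : ∀ n : ℕ, ∃ q : ℚ, r < (q : ℝ) ∧ (q : ℝ) < r + 1 / (n + 1) := by
      intro n
      have : r < r + 1 / (n + 1) := by
        have : (0:ℝ) < 1 / (n+1) := by positivity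
        linarith
      exact exists_rat_btwn this
    choose u h1 h2 using hex
    refine ⟨u, h1, ?_⟩
    have hupper : Filter.Tendsto (fun n : ℕ => r + 1 / ((n : ℝ) + 1)) Filter.atTop (nhds r) := by
      have := tendsto_one_div_add_atTop_nhds_zero_nat (𝕜 := ℝ)
      have h := Filter.Tendsto.const_add r this
      simpa using h
    exact tendsto_of_tendsto_of_tendsto_of_le_of_le tendsto_const_nhds hupper
      (fun n => (h1 n).le) (fun n => (h2 n).le)
  have hCsmul : ∀ (r : ℝ), ∀ x ∈ C, r • x ∈ C := by
    intro r x hx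
    obtain ⟨u, _, hu⟩ := hratseq r
    have htend : Filter.Tendsto (fun n => ((u n : ℝ)) • x) Filter.atTop (nhds (r • x)) :=
      hu.smul_const x
    refine isClosed_closure.mem_of_tendsto htend ?_
    filter_upwards with n
    exact hCsmulQ (u n) x hx
  have hC0 : (0 : H) ∈ C := by
    have := hCsmulQ 0 y₀ (subset_closure hTy₀)
    simpa using this
  set K : Submodule ℝ H :=
    { carrier := C
      add_mem' := fun {a b} ha hb => hCadd a ha b hb
      zero_mem' := hC0
      smul_mem' := fun r x hx => hCsmul r x hx } with hK
  have hKC : (K : Set H) = C := rfl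
  have hKclosed : IsClosed (K : Set H) := isClosed_closure
  have hKsep : TopologicalSpace.IsSeparable (K : Set H) := hTcount.isSeparable.closure
  have hGapprox : ∀ (t : ℝ), 0 ≤ t → ∀ x : H,
      ∃ u : ℕ → ℚ, (∀ n, A (u n) = G ((u n : ℝ))) ∧
        (∀ n, ((u n : ℝ)) ∈ Set.Ici (0:ℝ)) ∧
        Filter.Tendsto (fun n => G ((u n : ℝ)) x) Filter.atTop (nhds (G t x)) := by
    intro t ht x
    obtain ⟨u, h1, h2⟩ := hratseq t
    have hnn : ∀ n, ((u n : ℝ)) ∈ Set.Ici (0:ℝ) :=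
      fun n => Set.mem_Ici.2 (le_of_lt (lt_of_le_of_lt ht (h1 n)))
    have hAu : ∀ n, A (u n) = G ((u n : ℝ)) := by
      intro n
      rw [hA]
      simp only []
      rw [max_eq_left (hnn n)]
    have hcw := (hGcont x) t (Set.mem_Ici.2 ht)
    have : Filter.Tendsto (fun n => ((u n : ℝ))) Filter.atTop (nhdsWithin t (Set.Ici (0:ℝ))) :=
      tendsto_nhdsWithin_iff.2 ⟨h2, Filter.Eventually.of_forall hnn⟩
    exact ⟨u, hAu, hnn, (hcw.tendsto).comp this⟩
  have hKG : ∀ (t : ℝ), 0 ≤ t → ∀ x ∈ K, G t x ∈ K := by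
    intro t ht x hx
    obtain ⟨u, hAu, _, htend⟩ := hGapprox t ht x
    refine hKclosed.mem_of_tendsto htend ?_
    filter_upwards with n
    have h := hCop (A (u n)) (hTA (u n)) x hx
    rwa [hAu n] at h
  have hKperpG : ∀ (t : ℝ), 0 ≤ t → ∀ y ∈ Kᗮ, G t y ∈ Kᗮ := by
    intro t ht y hy
    rw [Submodule.mem_orthogonal]
    intro x hxK
    obtain ⟨u, hAu, _, htend⟩ := hGapprox t ht y
    have hzero : ∀ n, (inner ℝ x (G ((u n : ℝ)) y) : ℝ) = 0 := by
      intro n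
      have h1 : (inner ℝ x (G ((u n : ℝ)) y) : ℝ)
          = inner ℝ (ContinuousLinearMap.adjoint (G ((u n : ℝ))) x) y :=
        (ContinuousLinearMap.adjoint_inner_left _ y x).symm
      rw [h1]
      have hmem : ContinuousLinearMap.adjoint (G ((u n : ℝ))) x ∈ K := by
        have h := hCop _ (hTAadj (u n)) x hxK
        rwa [hAu n] at h
      exact (Submodule.mem_orthogonal K y).1 hy _ hmem
    have hlim : Filter.Tendsto (fun n => (inner ℝ x (G ((u n : ℝ)) y) : ℝ))
        Filter.atTop (nhds (inner ℝ x (G t y))) :=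
      Filter.Tendsto.inner tendsto_const_nhds htend
    rw [show (fun n => (inner ℝ x (G ((u n : ℝ)) y) : ℝ)) = fun _ => (0:ℝ) from funext hzero] at hlim
    exact tendsto_nhds_unique hlim tendsto_const_nhds
  have hKB : ∀ x ∈ K, B x ∈ K := fun x hx => hCop B hTB x hx
  have hKperpB : ∀ y ∈ Kᗮ, B y ∈ Kᗮ := by
    intro y hy
    rw [Submodule.mem_orthogonal]
    intro x hxK
    have h1 : (inner ℝ x (B y) : ℝ) = inner ℝ (ContinuousLinearMap.adjoint B x) y :=
      (ContinuousLinearMap.adjoint_inner_left B y x).symm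
    rw [h1]
    exact (Submodule.mem_orthogonal K y).1 hy _ (hCop _ hTBadj x hxK)
  haveI : CompleteSpace K := hKclosed.completeSpace_coe
  set P : H →L[ℝ] H := K.subtypeL.comp (K.orthogonalProjectionOnto) with hP
  have hPmem : ∀ x : H, P x ∈ K := fun x => (K.orthogonalProjectionOnto x).2
  have hPsub : ∀ x : H, x - P x ∈ Kᗮ := fun x => Submodule.sub_starProjection_mem_orthogonal (K := K) x
  have hPchar : ∀ (x v : H), v ∈ K → x - v ∈ Kᗮ → P x = v := by
    intro x v hv hxv
    exact Submodule.eq_starProjection_of_mem_orthogonal (K := K) hv hxv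
  have hPfix : ∀ x ∈ K, P x = x := by
    intro x hx
    refine hPchar x x hx ?_
    simpa using Submodule.zero_mem Kᗮ
  have hPnorm : ∀ x : H, ‖P x‖ ≤ ‖x‖ := by
    intro x
    have h1 : ‖P x‖ = ‖K.orthogonalProjectionOnto x‖ := rfl
    rw [h1]
    calc ‖K.orthogonalProjectionOnto x‖ ≤ ‖K.orthogonalProjectionOnto‖ * ‖x‖ :=
          (K.orthogonalProjectionOnto).le_opNorm x
      _ ≤ 1 * ‖x‖ := mul_le_mul_of_nonneg_right (Submodule.orthogonalProjectionOnto_norm_le K) (norm_nonneg x)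
      _ = ‖x‖ := one_mul _
  have hPcomm : ∀ (O : H →L[ℝ] H), (∀ z ∈ K, O z ∈ K) → (∀ z ∈ Kᗮ, O z ∈ Kᗮ) →
      ∀ x : H, P (O x) = O (P x) := by
    intro O hK' hKp x
    refine hPchar (O x) (O (P x)) (hK' _ (hPmem x)) ?_
    rw [show O x - O (P x) = O (x - P x) by rw [map_sub]]
    exact hKp _ (hPsub x)
  exact ⟨K, P, hKsep, subset_closure hTy₀, subset_closure hTc, hKG, hPnorm, hPfix, hPmem,
    fun t ht x => hPcomm (G t) (hKG t ht) (hKperpG t ht) x,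
    fun x => hPcomm B hKB hKperpB x⟩

/-- Corollary 3.2: when the control set is the closed ball B(0,R), every time
optimal control satisfies ‖B(u*(t))‖ = R for a.e. t ∈ [0, T*]. -/
theorem bang_bang_norm_maximal
    {H : Type*} [NormedAddCommGroup H] [InnerProductSpace ℝ H] [CompleteSpace H]
    [MeasurableSpace H] [BorelSpace H]
    (G : ℝ → H →L[ℝ] H)
    (hG0 : G 0 = ContinuousLinearMap.id ℝ H)
    (hGadd : ∀ s t : ℝ, 0 ≤ s → 0 ≤ t → G (s + t) = (G s).comp (G t))
    (hGcontr : ∀ t : ℝ, 0 ≤ t → ∀ x : H, ‖G t x‖ ≤ ‖x‖)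
    (hGcont : ∀ x : H, ContinuousOn (fun t => G t x) (Set.Ici (0 : ℝ)))
    (B : H →L[ℝ] H) (hB : ∀ x, ‖B x‖ ≤ ‖x‖)
    (hB_idem : ∀ x : H, B (B x) = B x)
    -- the null controllability property (C):
    (hC : ∀ T : ℝ, 0 < T → ∀ E : Set ℝ, MeasurableSet E → E ⊆ Set.Icc 0 T →
      0 < volume E →
      ∃ δ₀ L : ℝ, 0 < δ₀ ∧ δ₀ < T ∧ 0 < L ∧
        ∀ δ : ℝ, 0 ≤ δ → δ ≤ δ₀ → ∀ z₀ : H,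
          ∃ u : ℝ → H, Measurable u ∧
            (∀ᵐ t ∂(volume.restrict (Set.Ici (0 : ℝ))), ‖u t‖ ^ 2 ≤ L * ‖z₀‖ ^ 2) ∧
            G (T - δ) z₀ + ∫ s in Set.Ioc (0 : ℝ) (T - δ),
                G (T - δ - s)
                  ((Set.indicator {t : ℝ | t + δ ∈ E} (fun _ => (1 : ℝ)) s) • B (u s)) = 0)
    (y₀ : H) (S : Set H) (hS : S.Nonempty)
    (R : ℝ) (hR : 0 < R) (U : Set H) (hU : U = Metric.closedBall (0 : H) R)
    (Tstar : ℝ) (hTstar : 0 < Tstar)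
    (ustar : ℝ → H) (hustar_meas : Measurable ustar)
    (hustar_ad : ∀ᵐ t ∂(volume.restrict (Set.Ici (0 : ℝ))), ustar t ∈ U)
    -- optimality of (T*, u*):
    (hreach : G Tstar y₀ + ∫ s in Set.Ioc (0 : ℝ) Tstar, G (Tstar - s) (B (ustar s)) ∈ S)
    (hopt : ∀ u : ℝ → H, Measurable u →
      (∀ᵐ t ∂(volume.restrict (Set.Ici (0 : ℝ))), u t ∈ U) →
      ∀ t : ℝ, 0 ≤ t → t < Tstar →
        G t y₀ + ∫ s in Set.Ioc (0 : ℝ) t, G (t - s) (B (u s)) ∉ S) :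
    ∀ᵐ t ∂(volume.restrict (Set.Icc (0 : ℝ) Tstar)), ‖B (ustar t)‖ = R := by
  have hwmeas : Measurable fun t => B (ustar t) := B.continuous.measurable.comp hustar_meas
  -- Main claim: each strict sublevel set is null.
  have key : ∀ ε : ℝ, 0 < ε →
      volume (Set.Icc (0:ℝ) Tstar ∩ {t : ℝ | ‖B (ustar t)‖ ≤ R - ε}) = 0 := by
    intro ε hε
    by_contra hne
    set Eset := Set.Icc (0:ℝ) Tstar ∩ {t : ℝ | ‖B (ustar t)‖ ≤ R - ε} with hEset
    have hpos : 0 < volume Eset := pos_iff_ne_zero.2 hne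
    have hεR : ε ≤ R := by
      by_contra hcon
      push_neg at hcon
      have hemp : Eset = ∅ := by
        ext t
        simp only [hEset, Set.mem_inter_iff, Set.mem_setOf_eq, Set.mem_empty_iff_false,
          iff_false, not_and]
        intro _ h2
        have := norm_nonneg (B (ustar t)); linarith
      rw [hemp] at hpos; simp at hpos
    have hEmeas : MeasurableSet Eset :=
      measurableSet_Icc.inter (measurableSet_le hwmeas.norm measurable_const)
    have hEsub : Eset ⊆ Set.Icc 0 Tstar := Set.inter_subset_left
    obtain ⟨δ₀, L, hδ₀, hδ₀T, hL, hCC⟩ := hC Tstar hTstar Eset hEmeas hEsub hpos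
    -- choose small δ
    have htend : Filter.Tendsto (fun δ : ℝ => Real.sqrt L * (‖y₀ - G δ y₀‖ + R * δ))
        (nhdsWithin 0 (Set.Ici (0:ℝ))) (nhds 0) := by
      have h1 : Filter.Tendsto (fun δ : ℝ => G δ y₀) (nhdsWithin 0 (Set.Ici (0:ℝ)))
          (nhds y₀) := by
        have h := (hGcont y₀) 0 (by simp)
        rw [ContinuousWithinAt, hG0] at h
        simpa using h
      have h2 : Filter.Tendsto (fun δ : ℝ => ‖y₀ - G δ y₀‖)
          (nhdsWithin 0 (Set.Ici (0:ℝ))) (nhds 0) := by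
        have := ((tendsto_const_nhds (x := y₀)).sub h1).norm
        simpa using this
      have h3 : Filter.Tendsto (fun δ : ℝ => R * δ) (nhdsWithin 0 (Set.Ici (0:ℝ)))
          (nhds 0) := by
        have h4 : Filter.Tendsto (fun δ : ℝ => R * δ) (nhds 0) (nhds (R * 0)) :=
          (continuous_const.mul continuous_id).tendsto 0
        rw [mul_zero] at h4
        exact h4.mono_left nhdsWithin_le_nhds
      have := (h2.add h3).const_mul (Real.sqrt L)
      simpa using this
    have hev : ∀ᶠ δ in nhdsWithin 0 (Set.Ioi (0:ℝ)),
        (Real.sqrt L * (‖y₀ - G δ y₀‖ + R * δ) < ε ∧ δ < δ₀) ∧ 0 < δ := by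
      refine Filter.Eventually.and (Filter.Eventually.and ?_ ?_) ?_
      · exact (htend.mono_left (nhdsWithin_mono 0 Set.Ioi_subset_Ici_self)).eventually_lt_const hε
      · exact Filter.Eventually.filter_mono nhdsWithin_le_nhds (gt_mem_nhds hδ₀)
      · exact eventually_mem_nhdsWithin
    obtain ⟨δ, ⟨hδsmall, hδlt⟩, hδpos⟩ := hev.exists
    have hδT : δ < Tstar := lt_trans hδlt hδ₀T
    have hTδ0 : 0 ≤ Tstar - δ := by linarith
    set f : ℝ → H := fun s => G (Tstar - s) (B (ustar s)) with hf
    set ind : ℝ → ℝ := Set.indicator {t : ℝ | t + δ ∈ Eset} (fun _ => (1 : ℝ)) with hind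
    have hindmeas : MeasurableSet {t : ℝ | t + δ ∈ Eset} :=
      hEmeas.preimage (measurable_add_const δ)
    have hGz_comp : ∀ x : H, G (Tstar - δ) (G δ x) = G Tstar x := by
      intro x
      have h := hGadd (Tstar - δ) δ hTδ0 hδpos.le
      rw [show Tstar - δ + δ = Tstar by ring] at h
      rw [h]; rfl
    have hshift : ∀ᵐ s ∂(volume.restrict (Set.Ici (0:ℝ))), ‖ustar (s + δ)‖ ≤ R := by
      have hmeasU : MeasurableSet {t : ℝ | ustar t ∈ U} := by
        rw [hU]
        exact hustar_meas measurableSet_closedBall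
      have h := ae_shift_right hmeasU δ hδpos.le hustar_ad
      filter_upwards [h] with s hs
      rw [hU, Metric.mem_closedBall, dist_zero_right] at hs
      exact hs
    have hbase : ∀ᵐ s ∂(volume.restrict (Set.Ici (0:ℝ))), ‖ustar s‖ ≤ R := by
      filter_upwards [hustar_ad] with s hs
      rw [hU, Metric.mem_closedBall, dist_zero_right] at hs
      exact hs
    -- smallness of corrective controls
    have hsmall : ∀ (z : H) (v : ℝ → H), ‖z‖ ≤ ‖y₀ - G δ y₀‖ + R * δ →
        (∀ᵐ t ∂(volume.restrict (Set.Ici (0:ℝ))), ‖v t‖ ^ 2 ≤ L * ‖z‖ ^ 2) →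
        ∀ᵐ t ∂(volume.restrict (Set.Ici (0:ℝ))), ‖B (v t)‖ ≤ ε := by
      intro z v hz hv
      filter_upwards [hv] with t ht
      have h1 : ‖v t‖ ≤ Real.sqrt L * ‖z‖ := by
        have h2 : ‖v t‖ = Real.sqrt (‖v t‖ ^ 2) := (Real.sqrt_sq (norm_nonneg _)).symm
        have h3 : Real.sqrt (‖v t‖ ^ 2) ≤ Real.sqrt (L * ‖z‖ ^ 2) := Real.sqrt_le_sqrt ht
        rw [Real.sqrt_mul hL.le, Real.sqrt_sq (norm_nonneg z)] at h3
        rw [h2]; exact h3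
      have h4 : Real.sqrt L * ‖z‖ ≤ Real.sqrt L * (‖y₀ - G δ y₀‖ + R * δ) :=
        mul_le_mul_of_nonneg_left hz (Real.sqrt_nonneg L)
      exact le_trans (hB _) (le_trans h1 (le_trans h4 hδsmall.le))
    by_cases hfint : IntegrableOn f (Set.Ioc (0:ℝ) Tstar) volume
    · -- f integrable
      set K : Set H := G (Tstar - δ) '' Metric.closedBall 0 R with hK
      have hKconv : Convex ℝ K := by
        rintro x ⟨a, ha, rfl⟩ x' ⟨b, hb, rfl⟩ s t hs ht hst
        refine ⟨s • a + t • b, (convex_closedBall (0:H) R) ha hb hs ht hst, ?_⟩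
        rw [map_add, (G (Tstar - δ)).map_smul, (G (Tstar - δ)).map_smul]
      have hKcl : IsClosed K := isClosed_image_closedBall (G (Tstar - δ)) R
      have hμ0 : volume (Set.Ioc (0:ℝ) δ) ≠ 0 := by
        rw [Real.volume_Ioc]
        simp only [ne_eq, ENNReal.ofReal_eq_zero, not_le]
        linarith
      have hμt : volume (Set.Ioc (0:ℝ) δ) ≠ ⊤ := by
        rw [Real.volume_Ioc]; exact ENNReal.ofReal_ne_top
      have hfiδ : IntegrableOn f (Set.Ioc (0:ℝ) δ) volume :=
        hfint.mono_set (Set.Ioc_subset_Ioc le_rfl hδT.le)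
      have hfiδT : IntegrableOn f (Set.Ioc δ Tstar) volume :=
        hfint.mono_set (Set.Ioc_subset_Ioc_left hδpos.le)
      have hfK : ∀ᵐ s ∂(volume.restrict (Set.Ioc (0:ℝ) δ)), f s ∈ K := by
        filter_upwards [ae_restrict_mem measurableSet_Ioc,
          ae_restrict_of_ae_restrict_of_subset
            (Set.Ioc_subset_Icc_self.trans Set.Icc_subset_Ici_self) hbase]
          with s hsmem hsR
        refine ⟨G (δ - s) (B (ustar s)), ?_, ?_⟩
        · rw [Metric.mem_closedBall, dist_zero_right]
          exact le_trans (hGcontr (δ - s) (by linarith [hsmem.2]) _) (le_trans (hB _) hsR)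
        · have h := hGadd (Tstar - δ) (δ - s) hTδ0 (by linarith [hsmem.2])
          rw [show Tstar - δ + (δ - s) = Tstar - s by ring] at h
          show (G (Tstar - δ)) ((G (δ - s)) (B (ustar s))) = f s
          simp only [hf]
          rw [h]; rfl
      have havg : (⨍ s in Set.Ioc (0:ℝ) δ, f s) ∈ K :=
        hKconv.set_average_mem hKcl hμ0 hμt hfK hfiδ
      obtain ⟨x₀, hx₀ball, hx₀⟩ := havg
      have hx₀R : ‖x₀‖ ≤ R := by
        rwa [Metric.mem_closedBall, dist_zero_right] at hx₀ball
      set c : H := δ • x₀ with hc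
      have hcnorm : ‖c‖ ≤ R * δ := by
        rw [hc, norm_smul, Real.norm_eq_abs, abs_of_pos hδpos]
        nlinarith
      have hGc : G (Tstar - δ) c = ∫ s in Set.Ioc (0:ℝ) δ, f s := by
        rw [hc, (G (Tstar - δ)).map_smul, hx₀, setAverage_eq, Real.volume_real_Ioc,
          show δ - 0 = δ by ring, max_eq_left hδpos.le, smul_smul,
          mul_inv_cancel₀ hδpos.ne', one_smul]
      obtain ⟨K, P, hKsep, hKy₀, hKc, hKG, hPnorm, hPfix, hPmem, hPG, hPB⟩ :=
        exists_invariant_projection G hGcont B y₀ c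
      set z₀ : H := y₀ - G δ y₀ - c with hz₀
      have hz₀K : z₀ ∈ K := K.sub_mem (K.sub_mem hKy₀ (hKG δ hδpos.le y₀ hKy₀)) hKc
      have hz₀norm : ‖z₀‖ ≤ ‖y₀ - G δ y₀‖ + R * δ :=
        le_trans (norm_sub_le _ _) (by linarith)
      obtain ⟨v, hvmeas, hvbound, hvid⟩ := hCC δ hδpos.le hδlt.le z₀
      have hvb' : ∀ᵐ t ∂(volume.restrict (Set.Ici (0:ℝ))), ‖B (v t)‖ ≤ ε :=
        hsmall z₀ v hz₀norm hvbound
      have hGz₀ : G (Tstar - δ) z₀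
          = G (Tstar - δ) y₀ - G Tstar y₀ - ∫ s in Set.Ioc (0:ℝ) δ, f s := by
        rw [hz₀, map_sub, map_sub, hGz_comp, hGc]
      -- translated integrability and integral identity
      have hφint : IntegrableOn (fun s => f (s + δ)) (Set.Ioc (0:ℝ) (Tstar - δ)) volume := by
        have h2 : IntervalIntegrable f volume δ Tstar :=
          (intervalIntegrable_iff_integrableOn_Ioc_of_le hδT.le).2 hfiδT
        have h3 := h2.comp_add_right δ
        rw [show δ - δ = (0:ℝ) by ring] at h3
        exact (intervalIntegrable_iff_integrableOn_Ioc_of_le hTδ0).1 h3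
      have hφeq : (∫ s in Set.Ioc (0:ℝ) (Tstar - δ), f (s + δ))
          = ∫ s in Set.Ioc δ Tstar, f s := by
        rw [← intervalIntegral.integral_of_le hTδ0,
          intervalIntegral.integral_comp_add_right (a := (0:ℝ)) (b := Tstar - δ) f δ,
          show (0:ℝ) + δ = δ by ring, show Tstar - δ + δ = Tstar by ring,
          intervalIntegral.integral_of_le hδT.le]
      have hsplit : (∫ s in Set.Ioc (0:ℝ) Tstar, f s)
          = (∫ s in Set.Ioc (0:ℝ) δ, f s) + ∫ s in Set.Ioc δ Tstar, f s := by
        rw [← setIntegral_union (Set.Ioc_disjoint_Ioc_of_le le_rfl) measurableSet_Ioc hfiδ hfiδT,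
          Set.Ioc_union_Ioc_eq_Ioc hδpos.le hδT.le]
      by_cases hgint : IntegrableOn
          (fun s => G (Tstar - δ - s) ((ind s) • B (v s))) (Set.Ioc (0:ℝ) (Tstar - δ)) volume
      · -- corrective term integrable: full construction with a projected correction
        set bb : ℝ → H :=
          fun s => Set.indicator {t : ℝ | t + δ ∈ Eset} (fun s' => P (B (v s'))) s with hbb
        have hbbmeas : Measurable bb :=
          ((P.continuous.comp B.continuous).measurable.comp hvmeas).indicator hindmeas
        have hbbrange : ∀ s, bb s ∈ K := by
          intro s
          simp only [hbb]
          by_cases hmem : s ∈ {t : ℝ | t + δ ∈ Eset}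
          · rw [Set.indicator_of_mem hmem]; exact hPmem _
          · rw [Set.indicator_of_notMem hmem]; exact K.zero_mem
        have hbbsm : StronglyMeasurable bb := by
          rw [stronglyMeasurable_iff_measurable_separable]
          refine ⟨hbbmeas, hKsep.mono ?_⟩
          rintro _ ⟨s, rfl⟩
          exact hbbrange s
        set u : ℝ → H := fun s => B (ustar (s + δ)) + bb s with hu
        have hum : Measurable u := by
          have h := Measurable.add_stronglyMeasurable
            (B.continuous.measurable.comp (hustar_meas.comp (measurable_add_const δ))) hbbsm
          exact h
        have hbbsmall : ∀ᵐ s ∂(volume.restrict (Set.Ici (0:ℝ))), ‖bb s‖ ≤ ε := by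
          filter_upwards [hvb'] with s h2
          simp only [hbb]
          by_cases hmem : s ∈ {t : ℝ | t + δ ∈ Eset}
          · rw [Set.indicator_of_mem hmem]
            exact le_trans (hPnorm _) h2
          · rw [Set.indicator_of_notMem hmem]
            simp [hε.le]
        have huU : ∀ᵐ t ∂(volume.restrict (Set.Ici (0:ℝ))), u t ∈ U := by
          filter_upwards [hshift, hbbsmall] with s h1 h2
          rw [hU, Metric.mem_closedBall, dist_zero_right]
          simp only [hu]
          by_cases hmem : s ∈ {t : ℝ | t + δ ∈ Eset}
          · have hE2 : ‖B (ustar (s + δ))‖ ≤ R - ε := hmem.2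
            calc ‖B (ustar (s + δ)) + bb s‖
                ≤ ‖B (ustar (s + δ))‖ + ‖bb s‖ := norm_add_le _ _
              _ ≤ (R - ε) + ε := add_le_add hE2 h2
              _ = R := by ring
          · simp only [hbb]
            rw [Set.indicator_of_notMem hmem]
            rw [show B (ustar (s + δ)) + 0 = B (ustar (s + δ)) by abel]
            exact le_trans (hB _) h1
        have hint_eq : ∀ s ∈ Set.Ioc (0:ℝ) (Tstar - δ), G (Tstar - δ - s) (B (u s))
            = f (s + δ) + P (G (Tstar - δ - s) ((ind s) • B (v s))) := by
          intro s hs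
          have hts : (0:ℝ) ≤ Tstar - δ - s := by
            have := hs.2; linarith
          have hBu : B (u s) = B (ustar (s + δ)) + B (bb s) := by
            simp only [hu]
            rw [map_add, hB_idem]
          rw [hBu, map_add]
          congr 1
          · simp only [hf]
            rw [show Tstar - (s + δ) = Tstar - δ - s by ring]
          · simp only [hbb, hind]
            by_cases hmem : s ∈ {t : ℝ | t + δ ∈ Eset}
            · rw [Set.indicator_of_mem hmem, Set.indicator_of_mem hmem, one_smul]
              rw [show B (P (B (v s))) = P (B (B (v s))) from (hPB (B (v s))).symm, hB_idem,
                hPG (Tstar - δ - s) hts (B (v s))]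
            · rw [Set.indicator_of_notMem hmem, Set.indicator_of_notMem hmem, zero_smul]
              simp
        have hPgint : IntegrableOn (fun s => P (G (Tstar - δ - s) ((ind s) • B (v s))))
            (Set.Ioc (0:ℝ) (Tstar - δ)) volume := P.integrable_comp hgint
        have hintval : (∫ s in Set.Ioc (0:ℝ) (Tstar - δ), G (Tstar - δ - s) (B (u s)))
            = (∫ s in Set.Ioc (0:ℝ) (Tstar - δ), f (s + δ))
              + ∫ s in Set.Ioc (0:ℝ) (Tstar - δ),
                  P (G (Tstar - δ - s) ((ind s) • B (v s))) := by
          have hcongr : (∫ s in Set.Ioc (0:ℝ) (Tstar - δ), G (Tstar - δ - s) (B (u s)))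
              = ∫ s in Set.Ioc (0:ℝ) (Tstar - δ),
                  (f (s + δ) + P (G (Tstar - δ - s) ((ind s) • B (v s)))) := by
            refine integral_congr_ae ?_
            filter_upwards [ae_restrict_mem measurableSet_Ioc] with s hs
            exact hint_eq s hs
          rw [hcongr]
          exact integral_add hφint hPgint
        have hgval : (∫ s in Set.Ioc (0:ℝ) (Tstar - δ),
              P (G (Tstar - δ - s) ((ind s) • B (v s))))
            = -(G (Tstar - δ) z₀) := by
          rw [ContinuousLinearMap.integral_comp_comm P hgint,
            eq_neg_of_add_eq_zero_right hvid, map_neg,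
            hPfix _ (hKG (Tstar - δ) hTδ0 z₀ hz₀K)]
        have hmem : G (Tstar - δ) y₀
            + (∫ s in Set.Ioc (0:ℝ) (Tstar - δ), G (Tstar - δ - s) (B (u s))) ∈ S := by
          rw [hintval, hφeq, hgval, hGz₀,
            show G (Tstar - δ) y₀ + ((∫ s in Set.Ioc δ Tstar, f s)
              + -(G (Tstar - δ) y₀ - G Tstar y₀ - ∫ s in Set.Ioc (0:ℝ) δ, f s))
              = G Tstar y₀ + ((∫ s in Set.Ioc (0:ℝ) δ, f s) + ∫ s in Set.Ioc δ Tstar, f s)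
              by abel, ← hsplit]
          exact hreach
        exact hopt u hum huU (Tstar - δ) hTδ0 (by linarith) hmem
      · -- corrective term not integrable: uncorrected shifted control works
        have hg0 : (∫ s in Set.Ioc (0:ℝ) (Tstar - δ), G (Tstar - δ - s) ((ind s) • B (v s)))
            = 0 := integral_undef hgint
        have hz0eq : G (Tstar - δ) z₀ = 0 := by
          have h := hvid
          rw [hg0, add_zero] at h
          exact h
        have hGy : G (Tstar - δ) y₀ = G Tstar y₀ + ∫ s in Set.Ioc (0:ℝ) δ, f s := by
          have h2 : (0:H) = G (Tstar - δ) y₀ - G Tstar y₀ - ∫ s in Set.Ioc (0:ℝ) δ, f s := by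
            rw [← hz0eq]; exact hGz₀
          have h3 : G (Tstar - δ) y₀ - (G Tstar y₀ + ∫ s in Set.Ioc (0:ℝ) δ, f s) = 0 := by
            rw [show G (Tstar - δ) y₀ - (G Tstar y₀ + ∫ s in Set.Ioc (0:ℝ) δ, f s)
              = G (Tstar - δ) y₀ - G Tstar y₀ - ∫ s in Set.Ioc (0:ℝ) δ, f s by abel, ← h2]
          exact sub_eq_zero.1 h3
        set u : ℝ → H := fun s => B (ustar (s + δ)) with hu
        have hum : Measurable u :=
          B.continuous.measurable.comp (hustar_meas.comp (measurable_add_const δ))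
        have huU : ∀ᵐ t ∂(volume.restrict (Set.Ici (0:ℝ))), u t ∈ U := by
          filter_upwards [hshift] with s h1
          rw [hU, Metric.mem_closedBall, dist_zero_right, hu]
          exact le_trans (hB _) h1
        have hint_eq : ∀ s : ℝ, G (Tstar - δ - s) (B (u s)) = f (s + δ) := by
          intro s
          simp only [hu, hf]
          rw [hB_idem]
          rw [show Tstar - (s + δ) = Tstar - δ - s by ring]
        have hmem : G (Tstar - δ) y₀
            + (∫ s in Set.Ioc (0:ℝ) (Tstar - δ), G (Tstar - δ - s) (B (u s))) ∈ S := by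
          rw [integral_congr_ae (Filter.Eventually.of_forall hint_eq), hφeq, hGy,
            show G Tstar y₀ + (∫ s in Set.Ioc (0:ℝ) δ, f s) + ∫ s in Set.Ioc δ Tstar, f s
              = G Tstar y₀ + ((∫ s in Set.Ioc (0:ℝ) δ, f s) + ∫ s in Set.Ioc δ Tstar, f s)
              by abel, ← hsplit]
          exact hreach
        exact hopt u hum huU (Tstar - δ) hTδ0 (by linarith) hmem
    · -- f not integrable: the reached target is G Tstar y₀, reachable earlier
      have hY : (∫ s in Set.Ioc (0:ℝ) Tstar, f s) = 0 := integral_undef hfint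
      set z₀ : H := y₀ - G δ y₀ with hz₀
      have hz₀norm : ‖z₀‖ ≤ ‖y₀ - G δ y₀‖ + R * δ := by
        rw [hz₀]
        nlinarith [norm_nonneg (y₀ - G δ y₀)]
      obtain ⟨v, hvmeas, hvbound, hvid⟩ := hCC δ hδpos.le hδlt.le z₀
      have hvb' : ∀ᵐ t ∂(volume.restrict (Set.Ici (0:ℝ))), ‖B (v t)‖ ≤ ε :=
        hsmall z₀ v hz₀norm hvbound
      set u : ℝ → H := fun s => (ind s) • B (v s) with hu
      have hueq : u = fun s => Set.indicator {t : ℝ | t + δ ∈ Eset} (fun s' => B (v s')) s := by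
        funext s
        simp only [hu, hind]
        by_cases hmem : s ∈ {t : ℝ | t + δ ∈ Eset}
        · rw [Set.indicator_of_mem hmem, Set.indicator_of_mem hmem, one_smul]
        · rw [Set.indicator_of_notMem hmem, Set.indicator_of_notMem hmem, zero_smul]
      have hum : Measurable u := by
        rw [hueq]
        exact (B.continuous.measurable.comp hvmeas).indicator hindmeas
      have huU : ∀ᵐ t ∂(volume.restrict (Set.Ici (0:ℝ))), u t ∈ U := by
        filter_upwards [hvb'] with s h2
        rw [hU, Metric.mem_closedBall, dist_zero_right]
        simp only [hu, hind]
        by_cases hmem : s ∈ {t : ℝ | t + δ ∈ Eset}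
        · rw [Set.indicator_of_mem hmem, one_smul]
          exact le_trans h2 hεR
        · rw [Set.indicator_of_notMem hmem, zero_smul, norm_zero]
          exact hR.le
      have hint_eq : ∀ s : ℝ, G (Tstar - δ - s) (B (u s))
          = G (Tstar - δ - s) ((ind s) • B (v s)) := by
        intro s
        simp only [hu]
        rw [B.map_smul, hB_idem]
      have hmem : G (Tstar - δ) y₀
          + (∫ s in Set.Ioc (0:ℝ) (Tstar - δ), G (Tstar - δ - s) (B (u s))) ∈ S := by
        rw [integral_congr_ae (Filter.Eventually.of_forall hint_eq),
          eq_neg_of_add_eq_zero_right hvid, hz₀, map_sub, hGz_comp,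
          show G (Tstar - δ) y₀ + -(G (Tstar - δ) y₀ - G Tstar y₀) = G Tstar y₀ + 0 by abel,
          ← hY]
        exact hreach
      exact hopt u hum huU (Tstar - δ) hTδ0 (by linarith) hmem
  -- From the key claim conclude the a.e. equality.
  have hwle : ∀ᵐ t ∂(volume.restrict (Set.Icc (0:ℝ) Tstar)), ‖B (ustar t)‖ ≤ R := by
    have h := ae_restrict_of_ae_restrict_of_subset
      (Set.Icc_subset_Ici_self : Set.Icc (0:ℝ) Tstar ⊆ Set.Ici 0) hustar_ad
    filter_upwards [h] with t ht
    rw [hU, Metric.mem_closedBall, dist_zero_right] at ht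
    exact le_trans (hB _) ht
  have hcup : volume (⋃ n : ℕ,
      (Set.Icc (0:ℝ) Tstar ∩ {t : ℝ | ‖B (ustar t)‖ ≤ R - 1 / (n + 1)})) = 0 :=
    measure_iUnion_null fun n => key (1 / (n + 1)) (by positivity)
  have hae : ∀ᵐ t ∂volume, t ∉ ⋃ n : ℕ,
      (Set.Icc (0:ℝ) Tstar ∩ {t : ℝ | ‖B (ustar t)‖ ≤ R - 1 / (n + 1)}) :=
    measure_eq_zero_iff_ae_notMem.1 hcup
  filter_upwards [hwle, ae_restrict_mem measurableSet_Icc, ae_restrict_of_ae hae]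
    with t h1 h2 h3
  by_contra hne
  have hlt : ‖B (ustar t)‖ < R := lt_of_le_of_ne h1 hne
  obtain ⟨n, hn⟩ := exists_nat_one_div_lt (show 0 < R - ‖B (ustar t)‖ by linarith)
  exact h3 (Set.mem_iUnion.2 ⟨n, h2, by
    simp only [Set.mem_setOf_eq]
    linarith⟩)
end
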